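/- arXiv:1605.01109 — 6 statements merged into one kernel-verified Lean document; each statement's English description precedes it below -/
import Mathlib

section
/- Let ν > 0 and let θ₀ : ℝ → ℝ be continuous and bounded. Suppose θ₁, θ₂ : ℝ × [0,∞) → ℝ are continuous on ℝ × [0,∞), smooth on ℝ × (0,∞), bounded, satisfy the heat equation ∂θ/∂t = ν ∂²θ/∂x² for all x ∈ ℝ, t > 0, and satisfy θ₁(x,0) = θ₂(x,0) = θ₀(x) for all x ∈ ℝ. Then θ₁ = θ₂ on ℝ × [0,∞). -/
open Set Filter Topology

lemma deriv_nonneg_of_max_left {f : ℝ → ℝ} {f' a b : ℝ} (hab : a < b)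
    (hf : HasDerivAt f f' b) (hmax : ∀ t ∈ Ico a b, f t ≤ f b) : 0 ≤ f' := by
  have h := hasDerivAt_iff_tendsto_slope.mp hf
  have h2 : Tendsto (slope f b) (𝓝[<] b) (𝓝 f') :=
    h.mono_left (nhdsWithin_mono _ (fun t ht => ne_of_lt ht))
  refine ge_of_tendsto h2 ?_
  filter_upwards [Ioo_mem_nhdsLT_of_mem (⟨hab, le_refl b⟩ : b ∈ Ioc a b)] with t ht
  have h1 : f t ≤ f b := hmax t ⟨le_of_lt ht.1, ht.2⟩
  rw [slope_def_field]
  have hden : t - b < 0 := by linarith [ht.2]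
  have : (f t - f b) / (t - b) = (f b - f t) / (b - t) := by
    rw [← neg_div_neg_eq]; ring_nf
  rw [this]
  apply div_nonneg <;> linarith

lemma deriv2_nonpos_of_isLocalMax {g : ℝ → ℝ} {c x₀ : ℝ}
    (hg : Differentiable ℝ g) (h2 : HasDerivAt (deriv g) c x₀)
    (hmax : IsLocalMax g x₀) : c ≤ 0 := by
  by_contra hc
  push_neg at hc
  have h0 : deriv g x₀ = 0 := hmax.deriv_eq_zero
  have hs : Tendsto (slope (deriv g) x₀) (𝓝[>] x₀) (𝓝 c) :=
    (hasDerivAt_iff_tendsto_slope.mp h2).mono_left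
      (nhdsWithin_mono _ (fun t ht => ne_of_gt ht))
  have hev : ∀ᶠ t in 𝓝[>] x₀, 0 < deriv g t := by
    filter_upwards [hs.eventually (eventually_gt_nhds hc), self_mem_nhdsWithin] with t ht ht'
    have hlt : (0:ℝ) < slope (deriv g) x₀ t := ht
    rw [slope_def_field, h0, sub_zero] at hlt
    have htx : (0:ℝ) < t - x₀ := sub_pos.mpr ht'
    have := mul_pos hlt htx
    rwa [div_mul_cancel₀ _ (ne_of_gt htx)] at this
  have hev2 : ∀ᶠ t in 𝓝[>] x₀, 0 < deriv g t ∧ g t ≤ g x₀ :=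
    hev.and (hmax.filter_mono nhdsWithin_le_nhds)
  rcases mem_nhdsGT_iff_exists_Ioo_subset.mp hev2 with ⟨u, hu, hsub⟩
  have hu' : x₀ < u := hu
  set y := (x₀ + u) / 2 with hy
  have hxy : x₀ < y := by simp only [hy]; linarith
  have hyu : y < u := by simp only [hy]; linarith
  have hmono : StrictMonoOn g (Icc x₀ y) := by
    apply strictMonoOn_of_deriv_pos (convex_Icc _ _) hg.continuous.continuousOn
    intro t ht
    rw [interior_Icc] at ht
    exact (hsub ⟨ht.1, lt_trans ht.2 hyu⟩).1
  have h3 : g x₀ < g y :=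
    hmono (left_mem_Icc.mpr hxy.le) (right_mem_Icc.mpr hxy.le) hxy
  have h4 : g y ≤ g x₀ := (hsub ⟨hxy, hyu⟩).2
  linarith

set_option maxHeartbeats 1600000 in
lemma heat_sub_le (ν : ℝ) (hν : 0 < ν) (θ₁ θ₂ : ℝ → ℝ → ℝ)
    (hcont₁ : ContinuousOn (fun p : ℝ × ℝ => θ₁ p.1 p.2) (univ ×ˢ Ici 0))
    (hcont₂ : ContinuousOn (fun p : ℝ × ℝ => θ₂ p.1 p.2) (univ ×ˢ Ici 0))
    (hsmooth₁ : ContDiffOn ℝ (⊤ : ℕ∞) (fun p : ℝ × ℝ => θ₁ p.1 p.2) (univ ×ˢ Ioi 0))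
    (hsmooth₂ : ContDiffOn ℝ (⊤ : ℕ∞) (fun p : ℝ × ℝ => θ₂ p.1 p.2) (univ ×ˢ Ioi 0))
    (hbdd₁ : ∃ M : ℝ, ∀ x t : ℝ, 0 ≤ t → |θ₁ x t| ≤ M)
    (hbdd₂ : ∃ M : ℝ, ∀ x t : ℝ, 0 ≤ t → |θ₂ x t| ≤ M)
    (hheat₁ : ∀ x t : ℝ, 0 < t →
      deriv (fun s => θ₁ x s) t = ν * deriv (deriv (fun y => θ₁ y t)) x)
    (hheat₂ : ∀ x t : ℝ, 0 < t →
      deriv (fun s => θ₂ x s) t = ν * deriv (deriv (fun y => θ₂ y t)) x)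
    (h0 : ∀ x : ℝ, θ₁ x 0 = θ₂ x 0) :
    ∀ x t : ℝ, 0 ≤ t → θ₁ x t ≤ θ₂ x t := by
  obtain ⟨M₁, hM₁⟩ := hbdd₁
  obtain ⟨M₂, hM₂⟩ := hbdd₂
  set M := M₁ + M₂ with hM
  have hMnn : 0 ≤ M := by
    have := hM₁ 0 0 le_rfl
    have := hM₂ 0 0 le_rfl
    have := abs_nonneg (θ₁ 0 0)
    have := abs_nonneg (θ₂ 0 0)
    simp only [hM]; linarith
  -- the key rectangle estimate
  have claim : ∀ ε > (0:ℝ), ∀ a : ℝ, 0 ≤ a → ∀ L > (0:ℝ), 2 * M ≤ a * L ^ 2 →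
      ∀ x T : ℝ, |x| ≤ L → 0 ≤ T →
      θ₁ x T - θ₂ x T ≤ a * (x ^ 2 + 2 * ν * T) + ε * T := by
    intro ε hε a ha L hL haL x T hxL hT
    set W : ℝ × ℝ → ℝ :=
      fun p => (θ₁ p.1 p.2 - θ₂ p.1 p.2) - (a * (p.1 ^ 2 + 2 * ν * p.2) + ε * p.2) with hW
    set K : Set (ℝ × ℝ) := Icc (-L) L ×ˢ Icc 0 T with hKdef
    have hKsub : K ⊆ univ ×ˢ Ici 0 := by
      rintro ⟨p1, p2⟩ ⟨h1, h2⟩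
      exact ⟨mem_univ _, h2.1⟩
    have hWcont : ContinuousOn W K :=
      ((hcont₁.mono hKsub).sub (hcont₂.mono hKsub)).sub (by fun_prop)
    have hKcomp : IsCompact K := (isCompact_Icc).prod isCompact_Icc
    have hKne : K.Nonempty := ⟨(0, 0), by
      simp only [hKdef, mem_prod, mem_Icc]
      exact ⟨⟨by linarith, hL.le⟩, le_rfl, hT⟩⟩
    obtain ⟨⟨x₀, t₀⟩, hp₀K, hmax⟩ := hKcomp.exists_isMaxOn hKne hWcont
    obtain ⟨hx₀, ht₀⟩ := hp₀K
    have hx₀' : x₀ ∈ Icc (-L) L := hx₀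
    have ht₀' : t₀ ∈ Icc 0 T := ht₀
    -- it suffices that W(x₀,t₀) ≤ 0
    have hmem : ((x, T) : ℝ × ℝ) ∈ K := by
      refine ⟨?_, ⟨hT, le_rfl⟩⟩
      rw [mem_Icc]
      constructor <;> [linarith [neg_abs_le x, hxL]; linarith [le_abs_self x, hxL]]
    have hWle : W (x, T) ≤ W (x₀, t₀) := hmax hmem
    have hW0 : W (x₀, t₀) ≤ 0 := by
      rcases eq_or_lt_of_le ht₀'.1 with ht00 | ht0pos
      · -- t₀ = 0
        simp only [hW, ← ht00]
        have := h0 x₀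
        nlinarith [sq_nonneg x₀]
      · -- t₀ > 0
        by_cases hxb : x₀ ∈ Ioo (-L) L
        · -- interior point: contradiction
          exfalso
          -- x-slices are smooth
          have hx1 : ContDiff ℝ (⊤ : ℕ∞) (fun y => θ₁ y t₀) := by
            rw [← contDiffOn_univ]
            exact hsmooth₁.comp (contDiff_id.prodMk contDiff_const).contDiffOn
              (fun y _ => ⟨mem_univ _, ht0pos⟩)
          have hx2 : ContDiff ℝ (⊤ : ℕ∞) (fun y => θ₂ y t₀) := by
            rw [← contDiffOn_univ]
            exact hsmooth₂.comp (contDiff_id.prodMk contDiff_const).contDiffOn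
              (fun y _ => ⟨mem_univ _, ht0pos⟩)
          -- time slices are differentiable at t₀
          have ht1 : DifferentiableAt ℝ (fun s => θ₁ x₀ s) t₀ := by
            have : ContDiffOn ℝ (⊤ : ℕ∞) (fun s => θ₁ x₀ s) (Ioi 0) :=
              hsmooth₁.comp (contDiff_const.prodMk contDiff_id).contDiffOn
                (fun s hs => ⟨mem_univ _, hs⟩)
            exact (this.differentiableOn (by simp)).differentiableAt (Ioi_mem_nhds ht0pos)
          have ht2 : DifferentiableAt ℝ (fun s => θ₂ x₀ s) t₀ := by
            have : ContDiffOn ℝ (⊤ : ℕ∞) (fun s => θ₂ x₀ s) (Ioi 0) :=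
              hsmooth₂.comp (contDiff_const.prodMk contDiff_id).contDiffOn
                (fun s hs => ⟨mem_univ _, hs⟩)
            exact (this.differentiableOn (by simp)).differentiableAt (Ioi_mem_nhds ht0pos)
          set d₁ := deriv (fun s => θ₁ x₀ s) t₀ with hd₁
          set d₂ := deriv (fun s => θ₂ x₀ s) t₀ with hd₂
          set D₁ := deriv (deriv (fun y => θ₁ y t₀)) x₀ with hD₁
          set D₂ := deriv (deriv (fun y => θ₂ y t₀)) x₀ with hD₂
          -- time derivative of W(x₀, ·) at t₀ is nonneg
          have hf : HasDerivAt (fun s => W (x₀, s)) (d₁ - d₂ - (a * (2 * ν) + ε)) t₀ := by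
            have hpoly : HasDerivAt (fun s : ℝ => a * (x₀ ^ 2 + 2 * ν * s) + ε * s)
                (a * (2 * ν) + ε) t₀ := by
              have hfun : (fun s : ℝ => a * (x₀ ^ 2 + 2 * ν * s) + ε * s)
                  = fun s => (a * (2 * ν) + ε) * s + a * x₀ ^ 2 := by
                funext s; ring
              rw [hfun]
              simpa using ((hasDerivAt_id t₀).const_mul (a * (2 * ν) + ε)).add_const
                (a * x₀ ^ 2)
            exact (ht1.hasDerivAt.sub ht2.hasDerivAt).sub hpoly
          have htd : 0 ≤ d₁ - d₂ - (a * (2 * ν) + ε) := by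
            refine deriv_nonneg_of_max_left ht0pos hf ?_
            intro t ht
            exact hmax (⟨hx₀', ⟨ht.1, le_trans ht.2.le ht₀'.2⟩⟩ : _ ∈ K)
          -- space second derivative of W(·, t₀) at x₀ is nonpos
          set g : ℝ → ℝ := fun y => W (y, t₀) with hg
          have hgy : ∀ y : ℝ, HasDerivAt g
              (deriv (fun y' => θ₁ y' t₀) y - deriv (fun y' => θ₂ y' t₀) y - a * (2 * y)) y := by
            intro y
            have h1 := (hx1.differentiable (by simp) y).hasDerivAt
            have h2 := (hx2.differentiable (by simp) y).hasDerivAt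
            have h3 : HasDerivAt (fun y' : ℝ => a * (y' ^ 2 + 2 * ν * t₀) + ε * t₀)
                (a * (2 * y)) y := by
              have hfun : (fun y' : ℝ => a * (y' ^ 2 + 2 * ν * t₀) + ε * t₀)
                  = fun y' => a * y' ^ 2 + (a * (2 * ν * t₀) + ε * t₀) := by
                funext y'; ring
              rw [hfun]
              have := ((hasDerivAt_pow 2 y).const_mul a).add_const (a * (2 * ν * t₀) + ε * t₀)
              refine this.congr_deriv ?_
              push_cast
              ring
            exact (h1.sub h2).sub h3
          have hgdiff : Differentiable ℝ g := fun y => (hgy y).differentiableAt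
          have hg' : deriv g = fun y =>
              deriv (fun y' => θ₁ y' t₀) y - deriv (fun y' => θ₂ y' t₀) y - a * (2 * y) := by
            funext y; exact (hgy y).deriv
          have hgd : HasDerivAt (deriv g) (D₁ - D₂ - a * 2) x₀ := by
            rw [hg']
            have h1 := ((contDiff_infty_iff_deriv.mp
              ((contDiff_infty_iff_deriv.mp (hx1.of_le (by simp))).2)).1 x₀).hasDerivAt
            have h2 := ((contDiff_infty_iff_deriv.mp
              ((contDiff_infty_iff_deriv.mp (hx2.of_le (by simp))).2)).1 x₀).hasDerivAt
            have h3 : HasDerivAt (fun y : ℝ => a * (2 * y)) (a * 2) x₀ := by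
              have := (hasDerivAt_id x₀).const_mul (a * 2)
              simpa [mul_assoc] using this
            exact (h1.sub h2).sub h3
          have hloc : IsLocalMax g x₀ := by
            have hmemI : Ioo (-L) L ∈ 𝓝 x₀ := Ioo_mem_nhds hxb.1 hxb.2
            filter_upwards [hmemI] with y hy
            exact hmax (⟨Ioo_subset_Icc_self hy, ht₀'⟩ : _ ∈ K)
          have hxd : D₁ - D₂ - a * 2 ≤ 0 := deriv2_nonpos_of_isLocalMax hgdiff hgd hloc
          -- heat equation
          have he₁ : d₁ = ν * D₁ := hheat₁ x₀ t₀ ht0pos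
          have he₂ : d₂ = ν * D₂ := hheat₂ x₀ t₀ ht0pos
          nlinarith [mul_nonneg ha hν.le]
        · -- boundary in x
          have hxe : x₀ = -L ∨ x₀ = L := by
            rcases eq_or_lt_of_le hx₀'.1 with h | h
            · exact Or.inl h.symm
            rcases eq_or_lt_of_le hx₀'.2 with h' | h'
            · exact Or.inr h'
            · exact absurd ⟨h, h'⟩ hxb
          have hx₀sq : x₀ ^ 2 = L ^ 2 := by
            rcases hxe with h | h <;> rw [h] <;> ring
          have hb1 := hM₁ x₀ t₀ ht₀'.1
          have hb2 := hM₂ x₀ t₀ ht₀'.1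
          have h1 := abs_le.mp hb1
          have h2 := abs_le.mp hb2
          simp only [hW]
          rw [hx₀sq]
          nlinarith [mul_nonneg (mul_nonneg ha hν.le) ht₀'.1, mul_nonneg hε.le ht₀'.1]
    -- conclude
    have : W (x, T) ≤ 0 := le_trans hWle hW0
    simp only [hW] at this
    linarith
  -- now deduce the result
  intro x t ht
  by_contra hcon
  push_neg at hcon
  set p := θ₁ x t - θ₂ x t with hp
  have hppos : 0 < p := by simp only [hp]; linarith
  set q := x ^ 2 + 2 * ν * t with hq
  have hqnn : 0 ≤ q := by
    simp only [hq]; nlinarith [sq_nonneg x, mul_nonneg hν.le ht]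
  set ε := p / (4 * (t + 1)) with hε
  have hεpos : 0 < ε := by positivity
  set a := p / (4 * (q + 1)) with ha
  have hapos : 0 < a := by positivity
  set L := max |x| (Real.sqrt (2 * M / a)) + 1 with hL
  have hLx : |x| ≤ L := by
    simp only [hL]; linarith [le_max_left |x| (Real.sqrt (2 * M / a))]
  have hLpos : 0 < L := by
    have := abs_nonneg x
    simp only [hL]; linarith [le_max_left |x| (Real.sqrt (2 * M / a))]
  have hLsq : 2 * M ≤ a * L ^ 2 := by
    have h1 : Real.sqrt (2 * M / a) ≤ L := by
      simp only [hL]; linarith [le_max_right |x| (Real.sqrt (2 * M / a))]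
    have h2 : 2 * M / a ≤ L ^ 2 := by
      have := Real.sq_sqrt (by positivity : (0:ℝ) ≤ 2 * M / a)
      nlinarith [Real.sqrt_nonneg (2 * M / a)]
    calc 2 * M = a * (2 * M / a) := by field_simp
    _ ≤ a * L ^ 2 := by nlinarith
  have key := claim ε hεpos a hapos.le L hLpos hLsq x t hLx ht
  -- a * q ≤ p / 4 and ε * t ≤ p / 4
  have h3 : a * q ≤ p / 4 := by
    simp only [ha]
    rw [div_mul_eq_mul_div, div_le_div_iff₀ (by positivity) (by norm_num)]
    nlinarith
  have h4 : ε * t ≤ p / 4 := by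
    simp only [hε]
    rw [div_mul_eq_mul_div, div_le_div_iff₀ (by positivity) (by norm_num)]
    nlinarith
  simp only [← hq, ← hp] at key
  nlinarith [key, h3, h4, hppos]

/-- **Uniqueness of bounded solutions of the heat equation.** Two bounded functions,
continuous on `ℝ × [0,∞)`, smooth on `ℝ × (0,∞)`, solving the heat equation
`θ_t = ν θ_xx` for `t > 0` and agreeing with the initial datum `θ₀` at `t = 0`,
coincide on `ℝ × [0,∞)`. -/
theorem heat_equation_bounded_uniqueness
    (ν : ℝ) (hν : 0 < ν)
    (θ₀ : ℝ → ℝ) (hcont₀ : Continuous θ₀) (hbdd₀ : ∃ M : ℝ, ∀ y, |θ₀ y| ≤ M)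
    (θ₁ θ₂ : ℝ → ℝ → ℝ)
    (hcont₁ : ContinuousOn (fun p : ℝ × ℝ => θ₁ p.1 p.2) (univ ×ˢ Ici 0))
    (hcont₂ : ContinuousOn (fun p : ℝ × ℝ => θ₂ p.1 p.2) (univ ×ˢ Ici 0))
    (hsmooth₁ : ContDiffOn ℝ (⊤ : ℕ∞) (fun p : ℝ × ℝ => θ₁ p.1 p.2) (univ ×ˢ Ioi 0))
    (hsmooth₂ : ContDiffOn ℝ (⊤ : ℕ∞) (fun p : ℝ × ℝ => θ₂ p.1 p.2) (univ ×ˢ Ioi 0))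
    (hbdd₁ : ∃ M : ℝ, ∀ x t : ℝ, 0 ≤ t → |θ₁ x t| ≤ M)
    (hbdd₂ : ∃ M : ℝ, ∀ x t : ℝ, 0 ≤ t → |θ₂ x t| ≤ M)
    (hheat₁ : ∀ x t : ℝ, 0 < t →
      deriv (fun s => θ₁ x s) t = ν * deriv (deriv (fun y => θ₁ y t)) x)
    (hheat₂ : ∀ x t : ℝ, 0 < t →
      deriv (fun s => θ₂ x s) t = ν * deriv (deriv (fun y => θ₂ y t)) x)
    (hic₁ : ∀ x : ℝ, θ₁ x 0 = θ₀ x)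
    (hic₂ : ∀ x : ℝ, θ₂ x 0 = θ₀ x) :
    ∀ x t : ℝ, 0 ≤ t → θ₁ x t = θ₂ x t := by
  intro x t ht
  have h12 := heat_sub_le ν hν θ₁ θ₂ hcont₁ hcont₂ hsmooth₁ hsmooth₂ hbdd₁ hbdd₂
    hheat₁ hheat₂ (fun x => (hic₁ x).trans (hic₂ x).symm) x t ht
  have h21 := heat_sub_le ν hν θ₂ θ₁ hcont₂ hcont₁ hsmooth₂ hsmooth₁ hbdd₂ hbdd₁
    hheat₂ hheat₁ (fun x => (hic₂ x).trans (hic₁ x).symm) x t ht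
  linarith
end

section
/- Let ν > 0 and let g : ℝ → ℝ be continuous with compact support. Define θ₀(y) = exp(−(1/(2ν)) ∫₀^y g(s) ds) and, for x ∈ ℝ and t > 0, u(x,t) = [∫_{-∞}^{∞} ((x−y)/t) e^{−(x−y)²/(4νt)} θ₀(y) dy] / [∫_{-∞}^{∞} e^{−(x−y)²/(4νt)} θ₀(y) dy]. Then u satisfies the viscous Burgers equation ∂u/∂t (x,t) + u(x,t) ∂u/∂x (x,t) = ν ∂²u/∂x² (x,t) for all x ∈ ℝ and t > 0. -/
/-!
Write `Kₙ(x, t) = ∫ (x - y)ⁿ exp (-(x - y)² / (4νt)) θ₀(y) dy`. Since `θ₀` is continuous, positive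
and bounded (`g` is integrable), and the Gaussian factor dominates every polynomial locally
uniformly in `x` and `t`, one may differentiate under the integral sign:
`∂ₓKₙ = n Kₙ₋₁ - Kₙ₊₁ / (2νt)` and `∂ₜKₙ = Kₙ₊₂ / (4νt²)`.
The Hopf–Cole formula reads `u = K₁ / (t K₀) = -2ν ∂ₓ log K₀` with `K₀ > 0`, so Burgers' equation
becomes a rational identity in `K₀, …, K₃`.
-/

open MeasureTheory Real
open scoped Nat

lemma pow_abs_mul_exp_neg_sq_div_le (k : ℕ) {a : ℝ} (ha : 0 < a) (z : ℝ) :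
    |z| ^ k * exp (-z ^ 2 / a) ≤ k ! * exp (a / 2) * exp (-z ^ 2 / (2 * a)) := by
  have hpow : |z| ^ k ≤ k ! * exp |z| := by
    have := pow_div_factorial_le_exp (x := |z|) (abs_nonneg z) k
    rwa [div_le_iff₀ (by positivity), mul_comm] at this
  have hexp : |z| + -z ^ 2 / a ≤ a / 2 + -z ^ 2 / (2 * a) := by
    have : a / 2 + -z ^ 2 / (2 * a) - (|z| + -z ^ 2 / a) = (|z| - a) ^ 2 / (2 * a) := by
      field_simp; rw [← sq_abs z]; ring
    linarith [show 0 ≤ (|z| - a) ^ 2 / (2 * a) by positivity]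
  calc |z| ^ k * exp (-z ^ 2 / a) ≤ k ! * (exp |z| * exp (-z ^ 2 / a)) := by
        rw [← mul_assoc]; gcongr
    _ ≤ k ! * exp (a / 2) * exp (-z ^ 2 / (2 * a)) := by
        rw [mul_assoc, ← exp_add, ← exp_add]; gcongr

lemma exp_neg_sq_div_le_of_abs_sub_lt {a x x' y : ℝ} (ha : 0 < a) (hx : |x' - x| < 1) :
    exp (-(x' - y) ^ 2 / (2 * a)) ≤ exp (1 / (2 * a)) * exp (-(x - y) ^ 2 / (4 * a)) := by
  have hsq : (x - y) ^ 2 ≤ 2 * (x' - y) ^ 2 + 2 := by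
    nlinarith [sq_nonneg (x' - y + (x' - x)), sq_abs (x' - x), abs_nonneg (x' - x)]
  rw [← exp_add, exp_le_exp]
  have : 1 / (2 * a) + -(x - y) ^ 2 / (4 * a) - -(x' - y) ^ 2 / (2 * a)
      = (2 * (x' - y) ^ 2 + 2 - (x - y) ^ 2) / (4 * a) := by
    field_simp; ring
  linarith [show 0 ≤ (2 * (x' - y) ^ 2 + 2 - (x - y) ^ 2) / (4 * a) by
    apply div_nonneg <;> linarith]

lemma integrable_exp_neg_sq_div {a : ℝ} (ha : 0 < a) (x : ℝ) :
    Integrable fun y : ℝ => exp (-(x - y) ^ 2 / a) := by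
  convert (integrable_exp_neg_mul_sq (inv_pos.2 ha)).comp_sub_left x using 3
  ring

lemma hasDerivAt_pow_mul_exp_neg_sq_div (n : ℕ) (a y x : ℝ) :
    HasDerivAt (fun x => (x - y) ^ n * exp (-(x - y) ^ 2 / a))
      (n * ((x - y) ^ (n - 1) * exp (-(x - y) ^ 2 / a))
        - 2 * ((x - y) ^ (n + 1) * exp (-(x - y) ^ 2 / a)) / a) x := by
  have hsub : HasDerivAt (fun x => x - y) 1 x := (hasDerivAt_id x).sub_const y
  refine ((hsub.pow n).mul ((hsub.pow 2).neg.div_const a).exp).congr_deriv ?_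
  simp only [Pi.pow_apply, Pi.neg_apply, Nat.cast_ofNat, Nat.add_one_sub_one, pow_one, mul_one]
  ring

lemma hasDerivAt_exp_neg_sq_div_mul (z b : ℝ) {s : ℝ} (hs : s ≠ 0) :
    HasDerivAt (fun s => exp (-z ^ 2 / (b * s)))
      (z ^ 2 / (b * s ^ 2) * exp (-z ^ 2 / (b * s))) s := by
  have hdiv : ∀ s, -z ^ 2 / (b * s) = -z ^ 2 / b * s⁻¹ := fun s => by ring
  simp_rw [hdiv]
  convert ((hasDerivAt_inv hs).const_mul (-z ^ 2 / b)).exp using 1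
  ring

lemma abs_pow_mul_exp_mul_le {a b M θ : ℝ} (k : ℕ) (hb : 0 < b) (hba : b ≤ a) (hθ : |θ| ≤ M)
    (z : ℝ) :
    |z ^ k * exp (-z ^ 2 / b) * θ| ≤ M * k ! * exp (a / 2) * exp (-z ^ 2 / (2 * a)) := by
  have ha : 0 < a := hb.trans_le hba
  have hM : 0 ≤ M := (abs_nonneg θ).trans hθ
  have hexp : exp (-z ^ 2 / b) ≤ exp (-z ^ 2 / a) := by
    rw [exp_le_exp, neg_div, neg_div, neg_le_neg_iff]
    exact div_le_div_of_nonneg_left (sq_nonneg z) hb hba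
  rw [abs_mul, abs_mul, abs_pow, abs_exp]
  calc |z| ^ k * exp (-z ^ 2 / b) * |θ| ≤ |z| ^ k * exp (-z ^ 2 / a) * M :=
        mul_le_mul (by gcongr) hθ (abs_nonneg θ) (by positivity)
    _ ≤ k ! * exp (a / 2) * exp (-z ^ 2 / (2 * a)) * M :=
        mul_le_mul_of_nonneg_right (pow_abs_mul_exp_neg_sq_div_le k ha z) hM
    _ = M * k ! * exp (a / 2) * exp (-z ^ 2 / (2 * a)) := by ring

lemma integrable_pow_mul_exp_mul {a M : ℝ} {θ : ℝ → ℝ} (ha : 0 < a) (hθ : Continuous θ)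
    (hθM : ∀ y, |θ y| ≤ M) (k : ℕ) (x : ℝ) :
    Integrable fun y => (x - y) ^ k * exp (-(x - y) ^ 2 / a) * θ y :=
  ((integrable_exp_neg_sq_div (by positivity) x).const_mul _).mono'
    (by fun_prop : Continuous _).aestronglyMeasurable
    (ae_of_all _ fun y => abs_pow_mul_exp_mul_le k ha le_rfl (hθM y) (x - y))

lemma abs_pow_mul_exp_mul_le_of_abs_sub_lt {a M θ x x' y : ℝ} (k : ℕ) (ha : 0 < a)
    (hθ : |θ| ≤ M) (hx : |x' - x| < 1) :
    |(x' - y) ^ k * exp (-(x' - y) ^ 2 / a) * θ| ≤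
      M * k ! * exp (a / 2) * exp (1 / (2 * a)) * exp (-(x - y) ^ 2 / (4 * a)) := by
  have hM : 0 ≤ M := (abs_nonneg θ).trans hθ
  refine (abs_pow_mul_exp_mul_le k ha le_rfl hθ _).trans ?_
  rw [mul_assoc _ (exp (1 / (2 * a)))]
  gcongr
  exact exp_neg_sq_div_le_of_abs_sub_lt ha hx

noncomputable def heatMoment (ν : ℝ) (θ₀ : ℝ → ℝ) (n : ℕ) (x t : ℝ) : ℝ :=
  ∫ y, (x - y) ^ n * exp (-(x - y) ^ 2 / (4 * ν * t)) * θ₀ y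

section
variable {ν M : ℝ} {θ₀ : ℝ → ℝ}

lemma hasDerivAt_heatMoment_space (hν : 0 < ν) (hθ : Continuous θ₀) (hθM : ∀ y, |θ₀ y| ≤ M)
    (n : ℕ) {t : ℝ} (ht : 0 < t) (x : ℝ) :
    HasDerivAt (fun x => heatMoment ν θ₀ n x t)
      (n * heatMoment ν θ₀ (n - 1) x t - heatMoment ν θ₀ (n + 1) x t / (2 * ν * t)) x := by
  set a := 4 * ν * t
  have ha : 0 < a := by positivity
  set C : ℕ → ℝ := fun k => M * k ! * exp (a / 2) * exp (1 / (2 * a))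
  obtain ⟨-, hderiv⟩ := hasDerivAt_integral_of_dominated_loc_of_deriv_le
    (F := fun x' y => (x' - y) ^ n * exp (-(x' - y) ^ 2 / a) * θ₀ y)
    (F' := fun x' y => n * ((x' - y) ^ (n - 1) * exp (-(x' - y) ^ 2 / a) * θ₀ y)
      - 2 / a * ((x' - y) ^ (n + 1) * exp (-(x' - y) ^ 2 / a) * θ₀ y))
    (bound := fun y => (n * C (n - 1) + 2 / a * C (n + 1)) * exp (-(x - y) ^ 2 / (4 * a)))
    (Metric.ball_mem_nhds x one_pos)
    (.of_forall fun _ => (by fun_prop : Continuous _).aestronglyMeasurable)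
    (integrable_pow_mul_exp_mul ha hθ hθM n x)
    (by fun_prop : Continuous _).aestronglyMeasurable
    (ae_of_all _ fun y x' hx' => by
      rw [Metric.mem_ball, Real.dist_eq] at hx'
      refine (abs_sub _ _).trans ?_
      rw [abs_mul (n : ℝ), abs_mul (2 / a), Nat.abs_cast, abs_of_pos (by positivity : 0 < 2 / a)]
      calc _ ≤ n * (C (n - 1) * exp (-(x - y) ^ 2 / (4 * a)))
            + 2 / a * (C (n + 1) * exp (-(x - y) ^ 2 / (4 * a))) := by
            gcongr <;> exact abs_pow_mul_exp_mul_le_of_abs_sub_lt _ ha (hθM y) hx'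
        _ = _ := by ring)
    ((integrable_exp_neg_sq_div (by positivity) x).const_mul _)
    (ae_of_all _ fun y x' _ => by
      refine ((hasDerivAt_pow_mul_exp_neg_sq_div n a y x').mul_const (θ₀ y)).congr_deriv ?_
      ring)
  refine hderiv.congr_deriv ?_
  rw [integral_sub ((integrable_pow_mul_exp_mul ha hθ hθM _ x).const_mul _)
    ((integrable_pow_mul_exp_mul ha hθ hθM _ x).const_mul _),
    integral_const_mul, integral_const_mul]
  simp only [heatMoment, a]
  ring

lemma hasDerivAt_heatMoment_time (hν : 0 < ν) (hθ : Continuous θ₀) (hθM : ∀ y, |θ₀ y| ≤ M)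
    (n : ℕ) (x : ℝ) {t : ℝ} (ht : 0 < t) :
    HasDerivAt (fun t => heatMoment ν θ₀ n x t)
      (heatMoment ν θ₀ (n + 2) x t / (4 * ν * t ^ 2)) t := by
  have hM : 0 ≤ M := (abs_nonneg _).trans (hθM 0)
  -- for `|s - t| < t / 2` the kernel at time `s` is dominated by the one at time `3t / 2`
  have hbound : ∀ y, ∀ s ∈ Metric.ball t (t / 2),
      |(x - y) ^ (n + 2) * exp (-(x - y) ^ 2 / (4 * ν * s)) * θ₀ y / (4 * ν * s ^ 2)| ≤
        M * (n + 2)! * exp (6 * ν * t / 2) * exp (-(x - y) ^ 2 / (2 * (6 * ν * t))) /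
          (ν * t ^ 2) := by
    intro y s hs
    rw [Metric.mem_ball, Real.dist_eq, abs_lt] at hs
    have hs0 : 0 < s := by linarith
    have hts : ν * t ^ 2 ≤ 4 * ν * s ^ 2 := by
      have : t ^ 2 ≤ 4 * s ^ 2 := by nlinarith
      nlinarith [mul_le_mul_of_nonneg_left this hν.le]
    rw [abs_div, abs_of_pos (mul_pos (by positivity) (pow_pos hs0 2))]
    exact div_le_div₀ (by positivity)
      (abs_pow_mul_exp_mul_le (n + 2) (by positivity) (by nlinarith) (hθM y) _)
      (by positivity) hts
  obtain ⟨-, hderiv⟩ := hasDerivAt_integral_of_dominated_loc_of_deriv_le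
    (F := fun s y => (x - y) ^ n * exp (-(x - y) ^ 2 / (4 * ν * s)) * θ₀ y)
    (F' := fun s y =>
      (x - y) ^ (n + 2) * exp (-(x - y) ^ 2 / (4 * ν * s)) * θ₀ y / (4 * ν * s ^ 2))
    (Metric.ball_mem_nhds t (half_pos ht))
    (.of_forall fun _ => (by fun_prop : Continuous _).aestronglyMeasurable)
    (integrable_pow_mul_exp_mul (by positivity) hθ hθM n x)
    (by fun_prop : Continuous _).aestronglyMeasurable
    (ae_of_all _ hbound)
    (((integrable_exp_neg_sq_div (by positivity) x).const_mul _).div_const _)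
    (ae_of_all _ fun y s hs => by
      rw [Metric.mem_ball, Real.dist_eq, abs_lt] at hs
      refine (((hasDerivAt_exp_neg_sq_div_mul (x - y) (4 * ν) (by linarith : s ≠ 0)).const_mul
        ((x - y) ^ n)).mul_const (θ₀ y)).congr_deriv ?_
      ring)
  exact hderiv.congr_deriv (integral_div _ _)

lemma heatMoment_zero_pos (hν : 0 < ν) (hθ : Continuous θ₀) (hθM : ∀ y, |θ₀ y| ≤ M)
    (hθpos : ∀ y, 0 < θ₀ y) (x : ℝ) {t : ℝ} (ht : 0 < t) : 0 < heatMoment ν θ₀ 0 x t := by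
  have hpos : ∀ y, 0 < (x - y) ^ 0 * exp (-(x - y) ^ 2 / (4 * ν * t)) * θ₀ y := fun y => by
    rw [pow_zero, one_mul]
    exact mul_pos (exp_pos _) (hθpos y)
  rw [heatMoment, integral_pos_iff_support_of_nonneg (fun y => (hpos y).le)
    (integrable_pow_mul_exp_mul (by positivity) hθ hθM 0 x),
    Function.support_eq_univ fun y => (hpos y).ne']
  simp

end

lemma hopfCole_eq_heatMoment_div (ν : ℝ) (θ₀ : ℝ → ℝ) (x t : ℝ) :
    (∫ y, ((x - y) / t) * exp (-(x - y) ^ 2 / (4 * ν * t)) * θ₀ y) /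
      (∫ y, exp (-(x - y) ^ 2 / (4 * ν * t)) * θ₀ y) =
    heatMoment ν θ₀ 1 x t / (t * heatMoment ν θ₀ 0 x t) := by
  have hnum : (fun y => ((x - y) / t) * exp (-(x - y) ^ 2 / (4 * ν * t)) * θ₀ y) =
      fun y => (x - y) ^ 1 * exp (-(x - y) ^ 2 / (4 * ν * t)) * θ₀ y / t :=
    funext fun y => by ring
  simp only [hnum, integral_div, heatMoment, pow_zero, one_mul, div_div]

lemma abs_exp_mul_primitive_le {g : ℝ → ℝ} (hg : Integrable g) (c y : ℝ) :
    |exp (c * ∫ s in (0 : ℝ)..y, g s)| ≤ exp (|c| * ∫ s, |g s|) := by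
  rw [abs_exp, exp_le_exp]
  refine (le_abs_self _).trans ?_
  rw [abs_mul]
  gcongr
  exact intervalIntegral.norm_integral_le_integral_norm_uIoc.trans
    (setIntegral_le_integral hg.norm (ae_of_all _ fun _ => norm_nonneg _))

lemma burgers_of_moment_recursion {ν t x : ℝ} (hν : ν ≠ 0) (ht : 0 < t)
    (K : ℕ → ℝ → ℝ → ℝ) (u : ℝ → ℝ → ℝ)
    (hu : ∀ x s, 0 < s → u x s = K 1 x s / (s * K 0 x s)) (hK0 : ∀ x, K 0 x t ≠ 0)
    (hKx : ∀ n x, HasDerivAt (fun x => K n x t)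
      (n * K (n - 1) x t - K (n + 1) x t / (2 * ν * t)) x)
    (hKt : ∀ n, HasDerivAt (fun t => K n x t) (K (n + 2) x t / (4 * ν * t ^ 2)) t) :
    deriv (fun s => u x s) t + u x t * deriv (fun y => u y t) x =
      ν * deriv (deriv (fun y => u y t)) x := by
  have hux : ∀ x', HasDerivAt (fun y => u y t) ((K 0 x' t * (K 0 x' t - K 2 x' t / (2 * ν * t))
      + K 1 x' t ^ 2 / (2 * ν * t)) / (t * K 0 x' t ^ 2)) x' := by
    intro x'
    rw [funext fun y => hu y t ht]
    refine ((hKx 1 x').div ((hKx 0 x').const_mul t) (mul_ne_zero ht.ne' (hK0 x'))).congr_deriv ?_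
    have hK0x' := hK0 x'
    field_simp
    ring
  have huxx := (((hKx 0 x).mul ((hKx 0 x).sub ((hKx 2 x).div_const (2 * ν * t)))).add
    (((hKx 1 x).pow 2).div_const (2 * ν * t))).div (((hKx 0 x).pow 2).const_mul t)
    (mul_ne_zero ht.ne' (pow_ne_zero 2 (hK0 x)))
  have hut := ((hKt 1).div ((hasDerivAt_id t).mul (hKt 0))
    (mul_ne_zero ht.ne' (hK0 x))).congr_of_eventuallyEq
      ((eventually_gt_nhds ht).mono fun s hs => hu x s hs)
  have huxx' : deriv (fun x' => (K 0 x' t * (K 0 x' t - K 2 x' t / (2 * ν * t))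
      + K 1 x' t ^ 2 / (2 * ν * t)) / (t * K 0 x' t ^ 2)) x = _ := huxx.deriv
  rw [hut.deriv, funext fun x' => (hux x').deriv, huxx', hu x t ht]
  have hK0x := hK0 x
  simp only [Pi.mul_apply, Pi.pow_apply, Pi.sub_apply, Pi.add_apply, id, Nat.cast_ofNat,
    Nat.cast_zero, Nat.cast_one, Nat.reduceAdd, Nat.reduceSub]
  field_simp
  ring

/-- **The Hopf–Cole formula solves the Burgers equation.** For `ν > 0` and `g` continuous
with compact support, the function `u` given by the Hopf–Cole formula satisfies
`u_t + u u_x = ν u_xx` for all `x ∈ ℝ`, `t > 0`. -/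
theorem hopf_cole_solution_solves_burgers
    (ν : ℝ) (hν : 0 < ν)
    (g : ℝ → ℝ) (hcont : Continuous g) (hsupp : HasCompactSupport g)
    (θ₀ : ℝ → ℝ)
    (hθ₀ : ∀ y : ℝ, θ₀ y = Real.exp (-(1 / (2 * ν)) * ∫ s in (0:ℝ)..y, g s))
    (u : ℝ → ℝ → ℝ)
    (hu : ∀ x t : ℝ, 0 < t →
      u x t = (∫ y : ℝ, ((x - y) / t) * Real.exp (-(x - y) ^ 2 / (4 * ν * t)) * θ₀ y) /
              (∫ y : ℝ, Real.exp (-(x - y) ^ 2 / (4 * ν * t)) * θ₀ y)) :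
    ∀ x t : ℝ, 0 < t →
      deriv (fun s => u x s) t + u x t * deriv (fun y => u y t) x
        = ν * deriv (deriv (fun y => u y t)) x := by
  intro x t ht
  have hθ : Continuous θ₀ := by
    have := intervalIntegral.continuous_primitive (μ := volume)
      (fun a b => hcont.intervalIntegrable a b) 0
    rw [funext hθ₀]
    fun_prop
  have hθM (y : ℝ) : |θ₀ y| ≤ exp (|-(1 / (2 * ν))| * ∫ s, |g s|) :=
    hθ₀ y ▸ abs_exp_mul_primitive_le (hcont.integrable_of_hasCompactSupport hsupp) _ y
  have hθpos (y : ℝ) : 0 < θ₀ y := hθ₀ y ▸ exp_pos _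
  exact burgers_of_moment_recursion hν.ne' ht (heatMoment ν θ₀) u
    (fun x s hs => (hu x s hs).trans (hopfCole_eq_heatMoment_div ν θ₀ x s))
    (fun x => (heatMoment_zero_pos hν hθ hθM hθpos x ht).ne')
    (fun n x => hasDerivAt_heatMoment_space hν hθ hθM n ht x)
    (fun n => hasDerivAt_heatMoment_time hν hθ hθM n x ht)
end

section
/- Let ν > 0 and let g : ℝ → ℝ be continuous with compact support. Define θ₀(y) = exp(−(1/(2ν)) ∫₀^y g(s) ds) and, for x ∈ ℝ and t > 0, u(x,t) = [∫_{-∞}^{∞} ((x−y)/t) e^{−(x−y)²/(4νt)} θ₀(y) dy] / [∫_{-∞}^{∞} e^{−(x−y)²/(4νt)} θ₀(y) dy]. Then the map (x,t) ↦ u(x,t) is infinitely differentiable (C^∞) on the open set ℝ × (0,∞). -/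
open Set MeasureTheory Real Filter Topology

section HopfColeAux

/-- The Gaussian `fun v => exp (-v^2)` is integrable. -/
lemma hc_integrable_gauss : Integrable (fun v : ℝ => Real.exp (-v ^ 2)) := by
  have h := integrable_exp_neg_mul_sq (b := 1) one_pos
  simpa using h

lemma hc_cont_gauss : Continuous (fun v : ℝ => Real.exp (-v ^ 2)) := by fun_prop

/-- Primitive of the Gaussian. -/
noncomputable def hcQ (b : ℝ) : ℝ := ∫ v in (0:ℝ)..b, Real.exp (-v ^ 2)

lemma hcQ_hasDerivAt (b : ℝ) : HasDerivAt hcQ (Real.exp (-b ^ 2)) b := by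
  have h := intervalIntegral.integral_hasStrictDerivAt_right
    (hc_integrable_gauss.intervalIntegrable (a := 0) (b := b))
    (hc_cont_gauss.stronglyMeasurable.stronglyMeasurableAtFilter)
    hc_cont_gauss.continuousAt
  exact h.hasDerivAt

/-- value of the right tail Gaussian integral -/
noncomputable def hcCIoi : ℝ := ∫ v in Ioi (0:ℝ), Real.exp (-v ^ 2)

/-- value of the left tail Gaussian integral -/
noncomputable def hcCIic : ℝ := ∫ v in Iic (0:ℝ), Real.exp (-v ^ 2)

lemma hcQ_tendsto_atTop : Tendsto hcQ atTop (𝓝 hcCIoi) :=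
  intervalIntegral_tendsto_integral_Ioi 0 hc_integrable_gauss.integrableOn tendsto_id

lemma hcQ_tendsto_atBot : Tendsto hcQ atBot (𝓝 (-hcCIic)) := by
  have h := intervalIntegral_tendsto_integral_Iic 0 hc_integrable_gauss.integrableOn
    (tendsto_id (x := atBot))
  have h2 : hcQ = fun b => -∫ v in b..(0:ℝ), Real.exp (-v ^ 2) := by
    funext b; rw [hcQ, intervalIntegral.integral_symm]
  rw [h2]
  exact h.neg

/-- The coordinate function on `Icc a b`. -/
noncomputable def hcX (a b : ℝ) : C(Icc a b, ℝ) := ⟨fun z => (z : ℝ), continuous_subtype_val⟩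

lemma hc_integrableOn (a b : ℝ) (hab : a ≤ b) (w : ℝ → ℝ) (hw : Continuous w)
    (φ : C(Icc a b, ℝ)) :
    IntegrableOn (fun y => w y * φ (projIcc a b hab y)) (Icc a b) :=
  ((hw.mul (φ.continuous.comp (continuous_projIcc))).integrableOn_Icc)

/-- Integration against a continuous weight, as a continuous linear map on `C(Icc a b, ℝ)`. -/
noncomputable def hcInt (a b : ℝ) (hab : a ≤ b) (w : ℝ → ℝ) (hw : Continuous w) :
    C(Icc a b, ℝ) →L[ℝ] ℝ :=
  LinearMap.mkContinuous
    { toFun := fun φ => ∫ y in Icc a b, w y * φ (projIcc a b hab y)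
      map_add' := fun φ ψ => by
        show (∫ y in Icc a b, w y * (φ + ψ) (projIcc a b hab y))
            = (∫ y in Icc a b, w y * φ (projIcc a b hab y))
              + ∫ y in Icc a b, w y * ψ (projIcc a b hab y)
        have h : (fun y => w y * (φ + ψ) (projIcc a b hab y))
            = fun y => w y * φ (projIcc a b hab y) + w y * ψ (projIcc a b hab y) := by
          funext y; simp [mul_add]
        rw [h, integral_add (hc_integrableOn a b hab w hw φ) (hc_integrableOn a b hab w hw ψ)]
      map_smul' := fun c φ => by
        show (∫ y in Icc a b, w y * (c • φ) (projIcc a b hab y))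
            = c • ∫ y in Icc a b, w y * φ (projIcc a b hab y)
        have h : (fun y => w y * (c • φ) (projIcc a b hab y))
            = fun y => c • (w y * φ (projIcc a b hab y)) := by
          funext y; simp only [ContinuousMap.smul_apply, smul_eq_mul]; ring
        rw [h, integral_smul] }
    (∫ y in Icc a b, |w y|)
    (fun φ => by
      simp only [LinearMap.coe_mk, AddHom.coe_mk]
      calc ‖∫ y in Icc a b, w y * φ (projIcc a b hab y)‖
          ≤ ∫ y in Icc a b, ‖w y * φ (projIcc a b hab y)‖ :=
            norm_integral_le_integral_norm _
        _ ≤ ∫ y in Icc a b, |w y| * ‖φ‖ := by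
            refine setIntegral_mono_on (hc_integrableOn a b hab w hw φ).norm
              ((hw.abs.mul continuous_const).integrableOn_Icc) measurableSet_Icc ?_
            intro y _
            rw [Real.norm_eq_abs, abs_mul]
            exact mul_le_mul_of_nonneg_left (φ.norm_coe_le_norm _) (abs_nonneg _)
        _ = (∫ y in Icc a b, |w y|) * ‖φ‖ := by
            rw [integral_mul_const])

lemma hcInt_apply (a b : ℝ) (hab : a ≤ b) (w : ℝ → ℝ) (hw : Continuous w)
    (φ : C(Icc a b, ℝ)) :
    hcInt a b hab w hw φ = ∫ y in Icc a b, w y * φ (projIcc a b hab y) := rfl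

/-- Pointwise evaluation of the Banach-algebra exponential on `C(X, ℝ)`. -/
lemma hc_exp_apply {X : Type} [TopologicalSpace X] [CompactSpace X]
    (ψ : C(X, ℝ)) (z : X) : (NormedSpace.exp ψ) z = Real.exp (ψ z) := by
  have h := NormedSpace.map_exp (ContinuousMap.evalAlgHom ℝ ℝ z)
    (continuous_eval_const z) ψ
  simp only [ContinuousMap.evalAlgHom_apply] at h
  rw [h, Real.exp_eq_exp_ℝ]

/-- the coordinate square element on `Icc 0 1` -/
noncomputable def hcM2 : C(Icc (0:ℝ) 1, ℝ) :=
  ⟨fun τ => -((τ : ℝ) ^ 2), by fun_prop⟩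

lemma hcQ_eq (b : ℝ) :
    hcQ b = b * hcInt 0 1 zero_le_one (fun _ => 1) continuous_const
      (NormedSpace.exp ((b ^ 2) • hcM2)) := by
  rcases eq_or_ne b 0 with rfl | hb
  · simp [hcQ]
  · rw [hcInt_apply]
    have h1 : ∫ τ in Icc (0:ℝ) 1,
        (1 : ℝ) * (NormedSpace.exp ((b ^ 2) • hcM2)) (projIcc 0 1 zero_le_one τ)
        = ∫ τ in Icc (0:ℝ) 1, Real.exp (-(b * τ) ^ 2) := by
      refine setIntegral_congr_fun measurableSet_Icc (fun τ hτ => ?_)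
      rw [one_mul, hc_exp_apply, projIcc_of_mem zero_le_one hτ]
      rw [ContinuousMap.smul_apply]
      show Real.exp ((b ^ 2) • -(τ ^ 2)) = _
      rw [smul_eq_mul]
      congr 1
      ring
    rw [h1, integral_Icc_eq_integral_Ioc, ← intervalIntegral.integral_of_le zero_le_one]
    have h3 : (∫ τ in (0:ℝ)..1, Real.exp (-(b * τ) ^ 2))
        = b⁻¹ • ∫ v in (b * 0)..(b * 1), Real.exp (-v ^ 2) :=
      intervalIntegral.integral_comp_mul_left (fun v => Real.exp (-v ^ 2)) hb
    rw [h3, mul_zero, mul_one]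
    rw [smul_eq_mul, ← mul_assoc, mul_inv_cancel₀ hb, one_mul]
    rfl

lemma hcQ_analyticAt (b₀ : ℝ) : AnalyticAt ℝ hcQ b₀ := by
  have h : hcQ = fun b => b * hcInt 0 1 zero_le_one (fun _ => 1) continuous_const
      (NormedSpace.exp ((b ^ 2) • hcM2)) := funext hcQ_eq
  rw [h]
  have h1 : AnalyticAt ℝ (fun b : ℝ => (b ^ 2) • hcM2) b₀ :=
    ((analyticAt_id).pow 2).smul analyticAt_const
  have h2 : AnalyticAt ℝ (fun b : ℝ =>
      NormedSpace.exp ((b ^ 2) • hcM2)) b₀ :=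
    (NormedSpace.exp_analytic _).comp h1
  exact analyticAt_id.mul
    (((hcInt 0 1 zero_le_one (fun _ => 1) continuous_const).analyticAt _).comp h2)

end HopfColeAux

/-- **Smoothness of the Hopf–Cole solution.** For `ν > 0` and `g` continuous with compact
support, the Hopf–Cole solution `u` is `C^∞` on `ℝ × (0,∞)`. -/
theorem hopf_cole_solution_smooth
    (ν : ℝ) (hν : 0 < ν)
    (g : ℝ → ℝ) (hcont : Continuous g) (hsupp : HasCompactSupport g)
    (θ₀ : ℝ → ℝ)
    (hθ₀ : ∀ y : ℝ, θ₀ y = Real.exp (-(1 / (2 * ν)) * ∫ s in (0:ℝ)..y, g s))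
    (u : ℝ → ℝ → ℝ)
    (hu : ∀ x t : ℝ, 0 < t →
      u x t = (∫ y : ℝ, ((x - y) / t) * Real.exp (-(x - y) ^ 2 / (4 * ν * t)) * θ₀ y) /
              (∫ y : ℝ, Real.exp (-(x - y) ^ 2 / (4 * ν * t)) * θ₀ y)) :
    ContDiffOn ℝ (⊤ : ℕ∞) (fun p : ℝ × ℝ => u p.1 p.2) (univ ×ˢ Ioi 0) := by
  have hν' : ν ≠ 0 := ne_of_gt hν
  -- basic facts about g and θ₀
  have hgInt : Integrable g := hcont.integrable_of_hasCompactSupport hsupp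
  have hθc : Continuous θ₀ := by
    have : θ₀ = fun y => Real.exp (-(1 / (2 * ν)) * ∫ s in (0:ℝ)..y, g s) := funext hθ₀
    rw [this]
    exact Real.continuous_exp.comp (continuous_const.mul
      (intervalIntegral.continuous_primitive (fun a b => hgInt.intervalIntegrable) 0))
  have hθpos : ∀ y, 0 < θ₀ y := fun y => by rw [hθ₀ y]; exact Real.exp_pos _
  set Mθ : ℝ := Real.exp (|1 / (2 * ν)| * ∫ z : ℝ, |g z|) with hMθ
  have hθle : ∀ y, θ₀ y ≤ Mθ := by
    intro y
    rw [hθ₀ y, hMθ]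
    apply Real.exp_le_exp.2
    calc -(1 / (2 * ν)) * ∫ s in (0:ℝ)..y, g s
        ≤ |(-(1 / (2 * ν))) * ∫ s in (0:ℝ)..y, g s| := le_abs_self _
      _ = |1 / (2 * ν)| * |∫ s in (0:ℝ)..y, g s| := by rw [abs_mul, abs_neg]
      _ ≤ |1 / (2 * ν)| * ∫ z : ℝ, |g z| := by
          refine mul_le_mul_of_nonneg_left ?_ (abs_nonneg _)
          calc |∫ s in (0:ℝ)..y, g s| ≤ ∫ s in uIoc (0:ℝ) y, |g s| := by
                simpa [Real.norm_eq_abs] using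
                  intervalIntegral.norm_integral_le_integral_norm_uIoc
                    (a := (0:ℝ)) (b := y) (f := g) (μ := volume)
            _ ≤ ∫ z : ℝ, |g z| := by
                refine setIntegral_le_integral hgInt.abs ?_
                filter_upwards with z using abs_nonneg _
  -- radius of support
  obtain ⟨R, hR0, hgR⟩ : ∃ R : ℝ, 0 < R ∧ ∀ y : ℝ, R ≤ ‖y‖ → g y = 0 :=
    hsupp.exists_pos_le_norm
  have hRR : -R ≤ R := by linarith
  -- θ₀ is constant on the two tails
  have hconst : ∀ x y : ℝ, (∀ s ∈ uIcc x y, g s = 0) → θ₀ y = θ₀ x := by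
    intro x y hxy
    rw [hθ₀, hθ₀]
    congr 1
    have hsplit := intervalIntegral.integral_add_adjacent_intervals
      (a := (0:ℝ)) (b := x) (c := y)
      (hgInt.intervalIntegrable) (hgInt.intervalIntegrable)
    have hz : ∫ s in x..y, g s = 0 := by
      rw [intervalIntegral.integral_congr (g := fun _ => (0:ℝ)) (fun s hs => hxy s hs)]
      simp
    rw [← hsplit, hz, add_zero]
  have hθA : ∀ y : ℝ, y ≤ -R → θ₀ y = θ₀ (-R) := by
    intro y hy
    refine hconst (-R) y ?_
    intro s hs
    rcases mem_uIcc.mp hs with ⟨h1, h2⟩ | ⟨h1, h2⟩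
    · refine hgR s ?_
      rw [Real.norm_eq_abs]
      refine le_abs.mpr (Or.inr (by linarith))
    · refine hgR s ?_
      rw [Real.norm_eq_abs]
      refine le_abs.mpr (Or.inr (by linarith))
  have hθB : ∀ y : ℝ, R ≤ y → θ₀ y = θ₀ R := by
    intro y hy
    refine hconst R y ?_
    intro s hs
    rcases mem_uIcc.mp hs with ⟨h1, h2⟩ | ⟨h1, h2⟩
    · exact hgR s (by rw [Real.norm_eq_abs]; exact le_abs.mpr (Or.inl (by linarith)))
    · exact hgR s (by rw [Real.norm_eq_abs]; exact le_abs.mpr (Or.inl (by linarith)))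
  -- integrability of the various integrands
  have hgaussInt : ∀ x t : ℝ, 0 < t →
      Integrable (fun y => Real.exp (-(x - y) ^ 2 / (4 * ν * t))) := by
    intro x t ht
    have h4 : (0:ℝ) < (4 * ν * t)⁻¹ := by positivity
    have h := (integrable_exp_neg_mul_sq h4).comp_sub_right x
    refine h.congr (Filter.Eventually.of_forall fun y => ?_)
    show Real.exp (-(4 * ν * t)⁻¹ * (y - x) ^ 2) = Real.exp (-(x - y) ^ 2 / (4 * ν * t))
    congr 1
    ring
  have hDInt : ∀ x t : ℝ, 0 < t →
      Integrable (fun y => Real.exp (-(x - y) ^ 2 / (4 * ν * t)) * θ₀ y) := by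
    intro x t ht
    refine ((hgaussInt x t ht).mul_const Mθ).mono' ?_ ?_
    · exact ((Real.continuous_exp.comp (by fun_prop)).mul hθc).aestronglyMeasurable
    · filter_upwards with y
      rw [Real.norm_eq_abs, abs_mul, abs_of_pos (Real.exp_pos _), abs_of_pos (hθpos y)]
      exact mul_le_mul_of_nonneg_left (hθle y) (le_of_lt (Real.exp_pos _))
  have hNInt0 : ∀ x t : ℝ, 0 < t →
      Integrable (fun y => ((x - y) / t) * Real.exp (-(x - y) ^ 2 / (4 * ν * t))) := by
    intro x t ht
    have h4 : (0:ℝ) < (4 * ν * t)⁻¹ := by positivity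
    have h := (((integrable_mul_exp_neg_mul_sq h4).comp_sub_right x).div_const t).neg
    refine h.congr (Filter.Eventually.of_forall fun y => ?_)
    have he : -(4 * ν * t)⁻¹ * (y - x) ^ 2 = -(x - y) ^ 2 / (4 * ν * t) := by ring
    show -((y - x) * Real.exp (-(4 * ν * t)⁻¹ * (y - x) ^ 2) / t)
        = ((x - y) / t) * Real.exp (-(x - y) ^ 2 / (4 * ν * t))
    rw [he]
    ring
  have hNInt : ∀ x t : ℝ, 0 < t →
      Integrable (fun y => ((x - y) / t) * Real.exp (-(x - y) ^ 2 / (4 * ν * t)) * θ₀ y) := by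
    intro x t ht
    refine (((hNInt0 x t ht).abs).mul_const Mθ).mono' ?_ ?_
    · refine Continuous.aestronglyMeasurable ?_
      refine Continuous.mul (Continuous.mul (by fun_prop) (Real.continuous_exp.comp (by fun_prop))) hθc
    · filter_upwards with y
      rw [Real.norm_eq_abs, abs_mul]
      have hb : |θ₀ y| ≤ Mθ := by rw [abs_of_pos (hθpos y)]; exact hθle y
      exact mul_le_mul_of_nonneg_left hb (abs_nonneg _)
  -- tail formulas for the denominator kernel
  have hTailD : ∀ x t : ℝ, 0 < t →
      ((∫ y in Iic (-R), Real.exp (-(x - y) ^ 2 / (4 * ν * t)))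
        = Real.sqrt (4*ν*t) * hcQ ((-R - x) / Real.sqrt (4*ν*t)) + Real.sqrt (4*ν*t) * hcCIic)
      ∧ ((∫ y in Ioi R, Real.exp (-(x - y) ^ 2 / (4 * ν * t)))
        = Real.sqrt (4*ν*t) * hcCIoi - Real.sqrt (4*ν*t) * hcQ ((R - x) / Real.sqrt (4*ν*t))) := by
    intro x t ht
    have h4 : (0:ℝ) < 4 * ν * t := by positivity
    set s := Real.sqrt (4*ν*t) with hs
    have hs0 : 0 < s := Real.sqrt_pos.2 h4
    have hs2 : s ^ 2 = 4 * ν * t := Real.sq_sqrt h4.le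
    have hderiv : ∀ y : ℝ, HasDerivAt (fun y => s * hcQ ((y - x) / s))
        (Real.exp (-(x - y) ^ 2 / (4 * ν * t))) y := by
      intro y
      have h1 : HasDerivAt (fun y : ℝ => (y - x) / s) (1 / s) y := by
        simpa using ((hasDerivAt_id y).sub_const x).div_const s
      have h2 : HasDerivAt (fun y : ℝ => hcQ ((y - x) / s))
          (Real.exp (-((y - x) / s) ^ 2) * (1 / s)) y := (hcQ_hasDerivAt _).comp y h1
      have h3 := h2.const_mul s
      refine h3.congr_deriv (Eq.symm ?_)
      rw [div_pow, hs2]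
      rw [show -(x - y) ^ 2 / (4 * ν * t) = -((y - x) ^ 2 / (4 * ν * t)) from by ring]
      field_simp
    constructor
    · have hb : Tendsto (fun y : ℝ => (y - x) / s) atBot atBot := by
        refine Tendsto.atBot_div_const hs0 ?_
        simpa [sub_eq_add_neg] using tendsto_atBot_add_const_right atBot (-x) tendsto_id
      have htd : Tendsto (fun y : ℝ => s * hcQ ((y - x) / s)) atBot (𝓝 (s * -hcCIic)) :=
        (hcQ_tendsto_atBot.comp hb).const_mul s
      have := integral_Iic_of_hasDerivAt_of_tendsto' (a := -R) (fun y _ => hderiv y)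
        ((hgaussInt x t ht).integrableOn) htd
      rw [this]
      ring
    · have hb : Tendsto (fun y : ℝ => (y - x) / s) atTop atTop := by
        refine Tendsto.atTop_div_const hs0 ?_
        simpa [sub_eq_add_neg] using tendsto_atTop_add_const_right atTop (-x) tendsto_id
      have htd : Tendsto (fun y : ℝ => s * hcQ ((y - x) / s)) atTop (𝓝 (s * hcCIoi)) :=
        (hcQ_tendsto_atTop.comp hb).const_mul s
      have := integral_Ioi_of_hasDerivAt_of_tendsto' (a := R) (fun y _ => hderiv y)
        ((hgaussInt x t ht).integrableOn) htd
      rw [this]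
  -- tail formulas for the numerator kernel
  have hTailN : ∀ x t : ℝ, 0 < t →
      ((∫ y in Iic (-R), ((x - y) / t) * Real.exp (-(x - y) ^ 2 / (4 * ν * t)))
        = 2 * ν * Real.exp (-(x - (-R)) ^ 2 / (4 * ν * t)))
      ∧ ((∫ y in Ioi R, ((x - y) / t) * Real.exp (-(x - y) ^ 2 / (4 * ν * t)))
        = -(2 * ν * Real.exp (-(x - R) ^ 2 / (4 * ν * t)))) := by
    intro x t ht
    have h4 : (0:ℝ) < 4 * ν * t := by positivity
    have hderiv : ∀ y : ℝ, HasDerivAt (fun y => 2 * ν * Real.exp (-(x - y) ^ 2 / (4 * ν * t)))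
        (((x - y) / t) * Real.exp (-(x - y) ^ 2 / (4 * ν * t))) y := by
      intro y
      have h1 : HasDerivAt (fun y : ℝ => x - y) (-1) y := by
        simpa using (hasDerivAt_id y).const_sub x
      have h2 := ((h1.pow 2).neg.div_const (4 * ν * t)).exp.const_mul (2 * ν)
      refine h2.congr_deriv (Eq.symm ?_)
      simp only [Pi.neg_apply, Pi.pow_apply]
      field_simp
      ring
    have hbot : Tendsto (fun y : ℝ => 2 * ν * Real.exp (-(x - y) ^ 2 / (4 * ν * t)))
        atBot (𝓝 0) := by
      have hxy : Tendsto (fun y : ℝ => x - y) atBot atTop := by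
        simpa [sub_eq_add_neg] using
          tendsto_atTop_add_const_left atBot x (tendsto_neg_atBot_atTop (G := ℝ))
      have h5 : Tendsto (fun y : ℝ => -(x - y) ^ 2 / (4 * ν * t)) atBot atBot := by
        rw [show (fun y : ℝ => -(x - y) ^ 2 / (4 * ν * t))
            = fun y : ℝ => -((x - y) ^ 2 / (4 * ν * t)) from funext fun y => by ring]
        exact tendsto_neg_atTop_atBot.comp
          (((tendsto_pow_atTop two_ne_zero).comp hxy).atTop_div_const h4)
      have h6 := (Real.tendsto_exp_atBot.comp h5).const_mul (2 * ν)
      simpa using h6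
    have htop : Tendsto (fun y : ℝ => 2 * ν * Real.exp (-(x - y) ^ 2 / (4 * ν * t)))
        atTop (𝓝 0) := by
      have hxy : Tendsto (fun y : ℝ => (y - x)) atTop atTop := by
        simpa [sub_eq_add_neg] using tendsto_atTop_add_const_right atTop (-x) tendsto_id
      have h5 : Tendsto (fun y : ℝ => -(x - y) ^ 2 / (4 * ν * t)) atTop atBot := by
        rw [show (fun y : ℝ => -(x - y) ^ 2 / (4 * ν * t))
            = fun y : ℝ => -((y - x) ^ 2 / (4 * ν * t)) from funext fun y => by ring]
        exact tendsto_neg_atTop_atBot.comp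
          (((tendsto_pow_atTop two_ne_zero).comp hxy).atTop_div_const h4)
      have h6 := (Real.tendsto_exp_atBot.comp h5).const_mul (2 * ν)
      simpa using h6
    constructor
    · have := integral_Iic_of_hasDerivAt_of_tendsto' (a := -R) (fun y _ => hderiv y)
        ((hNInt0 x t ht).integrableOn) hbot
      rw [this, sub_zero]
    · have := integral_Ioi_of_hasDerivAt_of_tendsto' (a := R) (fun y _ => hderiv y)
        ((hNInt0 x t ht).integrableOn) htop
      rw [this, zero_sub]
  -- the Banach-algebra elements
  set Ψv : ℝ × ℝ → C(Icc (-R) R, ℝ) := fun p =>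
    (-(4 * ν * p.2)⁻¹) • ((p.1 • (1 : C(Icc (-R) R, ℝ)) - hcX (-R) R)
      * (p.1 • (1 : C(Icc (-R) R, ℝ)) - hcX (-R) R)) with hΨv
  set ρv : ℝ × ℝ → C(Icc (-R) R, ℝ) := fun p =>
    (p.2)⁻¹ • (p.1 • (1 : C(Icc (-R) R, ℝ)) - hcX (-R) R) with hρv
  have hΨval : ∀ (p : ℝ × ℝ) (z : Icc (-R) R),
      Ψv p z = -(4 * ν * p.2)⁻¹ * ((p.1 - (z:ℝ)) * (p.1 - (z:ℝ))) := by
    intro p z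
    rw [hΨv]
    simp only [ContinuousMap.smul_apply, ContinuousMap.mul_apply, ContinuousMap.sub_apply,
      ContinuousMap.one_apply, smul_eq_mul, mul_one]
    rfl
  have hρval : ∀ (p : ℝ × ℝ) (z : Icc (-R) R),
      ρv p z = (p.2)⁻¹ * (p.1 - (z:ℝ)) := by
    intro p z
    rw [hρv]
    simp only [ContinuousMap.smul_apply, ContinuousMap.sub_apply,
      ContinuousMap.one_apply, smul_eq_mul, mul_one]
    rfl
  -- main (compact) part equalities
  have hMD : ∀ x t : ℝ, 0 < t →
      (∫ y in Ioc (-R) R, Real.exp (-(x - y) ^ 2 / (4 * ν * t)) * θ₀ y)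
        = hcInt (-R) R hRR θ₀ hθc (NormedSpace.exp (Ψv (x, t))) := by
    intro x t ht
    rw [← integral_Icc_eq_integral_Ioc, hcInt_apply]
    refine setIntegral_congr_fun measurableSet_Icc (fun y hy => ?_)
    rw [hc_exp_apply, projIcc_of_mem hRR hy, hΨval]
    rw [show -(x - y) ^ 2 / (4 * ν * t)
        = -(4 * ν * (x, t).2)⁻¹ * (((x, t).1 - ((⟨y, hy⟩ : Icc (-R) R) : ℝ))
          * ((x, t).1 - ((⟨y, hy⟩ : Icc (-R) R) : ℝ))) from by ring]
    ring
  have hMN : ∀ x t : ℝ, 0 < t →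
      (∫ y in Ioc (-R) R, ((x - y) / t) * Real.exp (-(x - y) ^ 2 / (4 * ν * t)) * θ₀ y)
        = hcInt (-R) R hRR θ₀ hθc (ρv (x, t) * NormedSpace.exp (Ψv (x, t))) := by
    intro x t ht
    rw [← integral_Icc_eq_integral_Ioc, hcInt_apply]
    refine setIntegral_congr_fun measurableSet_Icc (fun y hy => ?_)
    rw [ContinuousMap.mul_apply, hc_exp_apply, projIcc_of_mem hRR hy, hΨval, hρval]
    rw [show -(x - y) ^ 2 / (4 * ν * t)
        = -(4 * ν * (x, t).2)⁻¹ * (((x, t).1 - ((⟨y, hy⟩ : Icc (-R) R) : ℝ))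
          * ((x, t).1 - ((⟨y, hy⟩ : Icc (-R) R) : ℝ))) from by ring]
    show ((x - y) / t) * _ * θ₀ y = _
    rw [div_eq_inv_mul]
    ring
  -- decomposition of the two full-line integrals
  set GD : ℝ × ℝ → ℝ := fun p =>
    θ₀ (-R) * (Real.sqrt (4*ν*p.2) * hcQ ((-R - p.1) / Real.sqrt (4*ν*p.2))
        + Real.sqrt (4*ν*p.2) * hcCIic)
      + hcInt (-R) R hRR θ₀ hθc (NormedSpace.exp (Ψv p))
      + θ₀ R * (Real.sqrt (4*ν*p.2) * hcCIoi
        - Real.sqrt (4*ν*p.2) * hcQ ((R - p.1) / Real.sqrt (4*ν*p.2))) with hGDdef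
  set GN : ℝ × ℝ → ℝ := fun p =>
    θ₀ (-R) * (2 * ν * Real.exp (-(p.1 - (-R)) ^ 2 / (4 * ν * p.2)))
      + hcInt (-R) R hRR θ₀ hθc (ρv p * NormedSpace.exp (Ψv p))
      + θ₀ R * (-(2 * ν * Real.exp (-(p.1 - R) ^ 2 / (4 * ν * p.2)))) with hGNdef
  have hsplit : ∀ (f : ℝ → ℝ), Integrable f →
      (∫ y : ℝ, f y) = (∫ y in Iic (-R), f y) + (∫ y in Ioc (-R) R, f y)
        + (∫ y in Ioi R, f y) := by
    intro f hf
    have h1 : (∫ y in Iic (-R), f y) + (∫ y in Ioi (-R), f y) = ∫ y : ℝ, f y :=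
      intervalIntegral.integral_Iic_add_Ioi hf.integrableOn hf.integrableOn
    have h2 : (∫ y in Ioi (-R), f y)
        = (∫ y in Ioc (-R) R, f y) + (∫ y in Ioi R, f y) := by
      rw [← Ioc_union_Ioi_eq_Ioi hRR,
        setIntegral_union (Ioc_disjoint_Ioi le_rfl) measurableSet_Ioi
          hf.integrableOn hf.integrableOn]
    rw [← h1, h2, add_assoc]
  have hDeq : ∀ p : ℝ × ℝ, 0 < p.2 →
      (∫ y : ℝ, Real.exp (-(p.1 - y) ^ 2 / (4 * ν * p.2)) * θ₀ y) = GD p := by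
    rintro ⟨x, t⟩ ht
    simp only at ht
    have h1 := hsplit _ (hDInt x t ht)
    have h3 : (∫ y in Iic (-R), Real.exp (-(x - y) ^ 2 / (4 * ν * t)) * θ₀ y)
        = θ₀ (-R) * ∫ y in Iic (-R), Real.exp (-(x - y) ^ 2 / (4 * ν * t)) := by
      rw [← integral_const_mul]
      exact setIntegral_congr_fun measurableSet_Iic fun y hy => by rw [hθA y hy]; ring
    have h4 : (∫ y in Ioi R, Real.exp (-(x - y) ^ 2 / (4 * ν * t)) * θ₀ y)
        = θ₀ R * ∫ y in Ioi R, Real.exp (-(x - y) ^ 2 / (4 * ν * t)) := by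
      rw [← integral_const_mul]
      exact setIntegral_congr_fun measurableSet_Ioi
        fun y hy => by rw [hθB y (le_of_lt hy)]; ring
    rw [hGDdef]
    show (∫ y : ℝ, Real.exp (-(x - y) ^ 2 / (4 * ν * t)) * θ₀ y) = _
    rw [h1, h3, h4, (hTailD x t ht).1, (hTailD x t ht).2, hMD x t ht]
  have hNeq : ∀ p : ℝ × ℝ, 0 < p.2 →
      (∫ y : ℝ, ((p.1 - y) / p.2) * Real.exp (-(p.1 - y) ^ 2 / (4 * ν * p.2)) * θ₀ y)
        = GN p := by
    rintro ⟨x, t⟩ ht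
    simp only at ht
    have h1 := hsplit _ (hNInt x t ht)
    have h3 : (∫ y in Iic (-R), ((x - y) / t) * Real.exp (-(x - y) ^ 2 / (4 * ν * t)) * θ₀ y)
        = θ₀ (-R) * ∫ y in Iic (-R), ((x - y) / t) * Real.exp (-(x - y) ^ 2 / (4 * ν * t)) := by
      rw [← integral_const_mul]
      exact setIntegral_congr_fun measurableSet_Iic fun y hy => by rw [hθA y hy]; ring
    have h4 : (∫ y in Ioi R, ((x - y) / t) * Real.exp (-(x - y) ^ 2 / (4 * ν * t)) * θ₀ y)
        = θ₀ R * ∫ y in Ioi R, ((x - y) / t) * Real.exp (-(x - y) ^ 2 / (4 * ν * t)) := by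
      rw [← integral_const_mul]
      exact setIntegral_congr_fun measurableSet_Ioi
        fun y hy => by rw [hθB y (le_of_lt hy)]; ring
    rw [hGNdef]
    show (∫ y : ℝ, ((x - y) / t) * Real.exp (-(x - y) ^ 2 / (4 * ν * t)) * θ₀ y) = _
    rw [h1, h3, h4, (hTailN x t ht).1, (hTailN x t ht).2, hMN x t ht]
  -- now prove analyticity at each point
  intro p₀ hp₀
  have ht₀ : 0 < p₀.2 := hp₀.2
  have h4₀ : (0:ℝ) < 4 * ν * p₀.2 := by positivity
  have h4ne : (4 * ν * p₀.2) ≠ 0 := ne_of_gt h4₀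
  have htne : p₀.2 ≠ 0 := ne_of_gt ht₀
  have hsnd : AnalyticAt ℝ (fun p : ℝ × ℝ => 4 * ν * p.2) p₀ :=
    analyticAt_const.mul analyticAt_snd
  have hsqrt : AnalyticAt ℝ (fun p : ℝ × ℝ => Real.sqrt (4 * ν * p.2)) p₀ :=
    AnalyticAt.comp (g := Real.sqrt) (f := fun p : ℝ × ℝ => 4 * ν * p.2)
      ((contDiffAt_sqrt h4ne).analyticAt) hsnd
  have hsqrtne : Real.sqrt (4 * ν * p₀.2) ≠ 0 := ne_of_gt (Real.sqrt_pos.2 h4₀)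
  have hQ1 : AnalyticAt ℝ (fun p : ℝ × ℝ => hcQ ((-R - p.1) / Real.sqrt (4 * ν * p.2))) p₀ :=
    AnalyticAt.comp (g := hcQ) (f := fun p : ℝ × ℝ => (-R - p.1) / Real.sqrt (4 * ν * p.2))
      (hcQ_analyticAt _) ((analyticAt_const.sub analyticAt_fst).div hsqrt hsqrtne)
  have hQ2 : AnalyticAt ℝ (fun p : ℝ × ℝ => hcQ ((R - p.1) / Real.sqrt (4 * ν * p.2))) p₀ :=
    AnalyticAt.comp (g := hcQ) (f := fun p : ℝ × ℝ => (R - p.1) / Real.sqrt (4 * ν * p.2))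
      (hcQ_analyticAt _) ((analyticAt_const.sub analyticAt_fst).div hsqrt hsqrtne)
  have hlin : AnalyticAt ℝ (fun p : ℝ × ℝ =>
      p.1 • (1 : C(Icc (-R) R, ℝ)) - hcX (-R) R) p₀ :=
    (analyticAt_fst.smul analyticAt_const).sub analyticAt_const
  have hΨa : AnalyticAt ℝ Ψv p₀ := by
    rw [hΨv]
    exact (((analyticAt_const.mul analyticAt_snd).inv h4ne).neg).smul (hlin.mul hlin)
  have hexpΨ : AnalyticAt ℝ (fun p => NormedSpace.exp (Ψv p)) p₀ :=
    AnalyticAt.comp (g := NormedSpace.exp) (f := Ψv)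
      (NormedSpace.exp_analytic _) hΨa
  have hρa : AnalyticAt ℝ ρv p₀ := by
    rw [hρv]
    exact (analyticAt_snd.inv htne).smul hlin
  have hexp1 : AnalyticAt ℝ (fun p : ℝ × ℝ =>
      Real.exp (-(p.1 - (-R)) ^ 2 / (4 * ν * p.2))) p₀ := by
    rw [Real.exp_eq_exp_ℝ]
    exact AnalyticAt.comp (g := NormedSpace.exp)
      (f := fun p : ℝ × ℝ => -(p.1 - (-R)) ^ 2 / (4 * ν * p.2)) (NormedSpace.exp_analytic _)
      ((((analyticAt_fst.sub analyticAt_const).pow 2).neg).div hsnd h4ne)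
  have hexp2 : AnalyticAt ℝ (fun p : ℝ × ℝ =>
      Real.exp (-(p.1 - R) ^ 2 / (4 * ν * p.2))) p₀ := by
    rw [Real.exp_eq_exp_ℝ]
    exact AnalyticAt.comp (g := NormedSpace.exp)
      (f := fun p : ℝ × ℝ => -(p.1 - R) ^ 2 / (4 * ν * p.2)) (NormedSpace.exp_analytic _)
      ((((analyticAt_fst.sub analyticAt_const).pow 2).neg).div hsnd h4ne)
  have hGDa : AnalyticAt ℝ GD p₀ := by
    rw [hGDdef]
    exact ((analyticAt_const.mul ((hsqrt.mul hQ1).add (hsqrt.mul analyticAt_const))).add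
      (AnalyticAt.comp (g := ⇑(hcInt (-R) R hRR θ₀ hθc))
        (f := fun p => NormedSpace.exp (Ψv p))
        (ContinuousLinearMap.analyticAt _ _) hexpΨ)).add
      (analyticAt_const.mul ((hsqrt.mul analyticAt_const).sub (hsqrt.mul hQ2)))
  have hGNa : AnalyticAt ℝ GN p₀ := by
    rw [hGNdef]
    exact ((analyticAt_const.mul (analyticAt_const.mul hexp1)).add
      (AnalyticAt.comp (g := ⇑(hcInt (-R) R hRR θ₀ hθc))
        (f := fun p => ρv p * NormedSpace.exp (Ψv p))
        (ContinuousLinearMap.analyticAt _ _) (hρa.mul hexpΨ))).add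
      (analyticAt_const.mul (analyticAt_const.mul hexp2).neg)
  -- the denominator does not vanish
  have hDpos : 0 < ∫ y : ℝ, Real.exp (-(p₀.1 - y) ^ 2 / (4 * ν * p₀.2)) * θ₀ y := by
    rw [integral_pos_iff_support_of_nonneg_ae ?_ (hDInt p₀.1 p₀.2 ht₀)]
    · have hsupp_univ : Function.support
          (fun y => Real.exp (-(p₀.1 - y) ^ 2 / (4 * ν * p₀.2)) * θ₀ y) = univ := by
        ext y
        simp only [Function.mem_support, mem_univ, iff_true]
        exact (mul_pos (Real.exp_pos _) (hθpos y)).ne'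
      rw [hsupp_univ, Real.volume_univ]
      exact ENNReal.zero_lt_top
    · filter_upwards with y
      exact le_of_lt (mul_pos (Real.exp_pos _) (hθpos y))
  have hGDne : GD p₀ ≠ 0 := by
    rw [← hDeq p₀ ht₀]
    exact ne_of_gt hDpos
  -- assemble
  have hfinal : AnalyticAt ℝ (fun p : ℝ × ℝ => u p.1 p.2) p₀ := by
    refine (hGNa.div hGDa hGDne).congr ?_
    have hmem : {p : ℝ × ℝ | 0 < p.2} ∈ 𝓝 p₀ :=
      (isOpen_lt continuous_const continuous_snd).mem_nhds ht₀
    filter_upwards [hmem] with p hp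
    rw [Pi.div_apply, hu p.1 p.2 hp, ← hDeq p hp, ← hNeq p hp]
  exact hfinal.contDiffAt.contDiffWithinAt
end

section
/- Let ν > 0 and let g : ℝ → ℝ be continuous with compact support. Define θ₀(y) = exp(−(1/(2ν)) ∫₀^y g(s) ds) and, for x ∈ ℝ and t > 0, u(x,t) = [∫_{-∞}^{∞} ((x−y)/t) e^{−(x−y)²/(4νt)} θ₀(y) dy] / [∫_{-∞}^{∞} e^{−(x−y)²/(4νt)} θ₀(y) dy]. Then ‖u(·,t)‖_{L²(ℝ)} = O(t^{−1/4}) as t → ∞; that is, there exist C > 0 and T > 0 such that for all t ≥ T, (∫_{-∞}^{∞} |u(x,t)|² dx)^{1/2} ≤ C t^{−1/4}. -/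
/-! The weight `θ₀` is pinched between two positive constants `m ≤ M` and is constant outside a
compact interval `[-R, R]`. Hence the denominator of `u(·, t)` is at least `m √(4πνt)`, while in the
numerator one may subtract the constant value of `θ₀` on the side facing `x`, because the kernel
`z e^{-z²/(4νt)}` is odd; what is left is supported at distance at least `|x| - R` from `x`. This
gives the self-similar bound `|u(x, t)| ≲ t^{-1/2} e^{-x²/(32νt)}` for `t ≥ 1`, whose `L²` norm is
of order `t^{-1/4}`. -/

open Set MeasureTheory Real

theorem abs_mul_exp_neg_mul_sq_le {b : ℝ} (hb : 0 < b) (z : ℝ) :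
    |z| * exp (-b * z ^ 2) ≤ exp (-(b / 2) * z ^ 2) / √b := by
  have hsb : 0 < √b := sqrt_pos.2 hb
  have key : √b * |z| ≤ exp (b / 2 * z ^ 2) := by
    have : (√b * |z|) ^ 2 = b * z ^ 2 := by rw [mul_pow, sq_sqrt hb.le, sq_abs]
    nlinarith [add_one_le_exp (b / 2 * z ^ 2), sq_nonneg (√b * |z| - 1)]
  rw [le_div_iff₀ hsb]
  calc |z| * exp (-b * z ^ 2) * √b = √b * |z| * exp (-b * z ^ 2) := by ring
    _ ≤ exp (b / 2 * z ^ 2) * exp (-b * z ^ 2) := by gcongr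
    _ = exp (-(b / 2) * z ^ 2) := by rw [← exp_add]; ring_nf

theorem integral_mul_exp_neg_mul_sq_eq_zero (b : ℝ) : ∫ z : ℝ, z * exp (-b * z ^ 2) = 0 := by
  have h := integral_neg_eq_self (fun z : ℝ => z * exp (-b * z ^ 2)) volume
  simp only [neg_sq, neg_mul, integral_neg] at h
  simp only [neg_mul]
  linarith

/-- At `b = (4νt)⁻¹`, `gaussConv` is the denominator of the Hopf–Cole formula and
`t⁻¹ * gaussMoment` its numerator. -/
noncomputable def gaussConv (b : ℝ) (θ : ℝ → ℝ) (x : ℝ) : ℝ :=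
  ∫ y, exp (-b * (x - y) ^ 2) * θ y

noncomputable def gaussMoment (b : ℝ) (θ : ℝ → ℝ) (x : ℝ) : ℝ :=
  ∫ y, (x - y) * exp (-b * (x - y) ^ 2) * θ y

section GaussianMoments

variable {b M : ℝ} {θ : ℝ → ℝ}

theorem integrable_gaussMoment_integrand (hb : 0 < b) (hθ : AEStronglyMeasurable θ)
    (hM : ∀ y, |θ y| ≤ M) (x : ℝ) :
    Integrable fun y => (x - y) * exp (-b * (x - y) ^ 2) * θ y :=
  ((integrable_mul_exp_neg_mul_sq hb).comp_sub_left x).mul_bdd hθ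
    (.of_forall fun y => by simpa using hM y)

theorem gaussMoment_eq_integral_sub_const (hb : 0 < b) (hθ : AEStronglyMeasurable θ)
    (hM : ∀ y, |θ y| ≤ M) (x c : ℝ) :
    gaussMoment b θ x = ∫ y, (x - y) * exp (-b * (x - y) ^ 2) * (θ y - c) := by
  have hint := integrable_gaussMoment_integrand hb hθ hM x
  have hodd : ∫ y, (x - y) * exp (-b * (x - y) ^ 2) * c = 0 := by
    rw [integral_mul_const, integral_sub_left_eq_self (fun z => z * exp (-b * z ^ 2)),
      integral_mul_exp_neg_mul_sq_eq_zero, zero_mul]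
  simp_rw [mul_sub]
  rw [integral_sub hint ((integrable_mul_exp_neg_mul_sq hb).comp_sub_left x |>.mul_const c),
    hodd, sub_zero, gaussMoment]

theorem gaussMoment_comp_neg (x : ℝ) :
    gaussMoment b (fun y => θ (-y)) (-x) = -gaussMoment b θ x := by
  rw [gaussMoment, ← integral_neg_eq_self, gaussMoment, ← integral_neg]
  congr 1 with y
  rw [neg_neg, show -x - -y = -(x - y) by ring, neg_sq]
  ring

theorem mul_sqrt_pi_div_le_gaussConv (hb : 0 < b) (hθ : AEStronglyMeasurable θ)
    (hM : ∀ y, |θ y| ≤ M) {m : ℝ} (hm : ∀ y, m ≤ θ y) (x : ℝ) :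
    m * √(π / b) ≤ gaussConv b θ x := by
  have hker := (integrable_exp_neg_mul_sq hb).comp_sub_left x
  calc m * √(π / b) = ∫ y, exp (-b * (x - y) ^ 2) * m := by
        rw [integral_mul_const, integral_sub_left_eq_self (fun z => exp (-b * z ^ 2)),
          integral_gaussian, mul_comm]
    _ ≤ gaussConv b θ x :=
        integral_mono (hker.mul_const m) (hker.mul_bdd hθ (.of_forall fun y => by simpa using hM y))
          fun y => mul_le_mul_of_nonneg_left (hm y) (exp_pos _).le

theorem abs_gaussMoment_le_of_eq_on_Ici (hb : 0 < b) (hθ : AEStronglyMeasurable θ)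
    (hM : ∀ y, |θ y| ≤ M) {R : ℝ} (hR : ∀ y, R ≤ y → θ y = θ R) {x : ℝ} (hx : 0 ≤ x) :
    |gaussMoment b θ x| ≤
      4 * M * √(π / b) / √b * exp (b * R ^ 2 / 4) * exp (-(b / 8) * x ^ 2) := by
  have hM0 : 0 ≤ M := (abs_nonneg _).trans (hM 0)
  set E := exp (b * R ^ 2 / 4) * exp (-(b / 8) * x ^ 2)
  have hpt : ∀ y, ‖(x - y) * exp (-b * (x - y) ^ 2) * (θ y - θ R)‖ ≤
      2 * M * E / √b * exp (-(b / 4) * (x - y) ^ 2) := by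
    intro y
    rcases le_or_gt R y with hy | hy
    · rw [hR y hy, sub_self, mul_zero, norm_zero]
      positivity
    -- for `y < R` the kernel at distance `x - y` already carries the decay in `x`
    have hdist : x ^ 2 / 2 - R ^ 2 ≤ (x - y) ^ 2 := by
      rcases le_or_gt R x with h | h
      · nlinarith [sq_nonneg (x - 2 * R)]
      · nlinarith [sq_nonneg (x - y)]
    have hdecay : exp (-(b / 4) * (x - y) ^ 2) ≤ E := by
      simp only [E, ← exp_add]; exact exp_le_exp.2 (by nlinarith)
    have hosc : |θ y - θ R| ≤ 2 * M := by
      linarith [abs_sub (θ y) (θ R), hM y, hM R]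
    calc ‖(x - y) * exp (-b * (x - y) ^ 2) * (θ y - θ R)‖
        = |x - y| * exp (-b * (x - y) ^ 2) * |θ y - θ R| := by
          rw [Real.norm_eq_abs, abs_mul, abs_mul, abs_of_pos (exp_pos _)]
      _ ≤ exp (-(b / 2) * (x - y) ^ 2) / √b * (2 * M) := by
          gcongr
          exact abs_mul_exp_neg_mul_sq_le hb _
      _ = exp (-(b / 4) * (x - y) ^ 2) * exp (-(b / 4) * (x - y) ^ 2) / √b * (2 * M) := by
          rw [← exp_add]; ring_nf
      _ ≤ E * exp (-(b / 4) * (x - y) ^ 2) / √b * (2 * M) := by gcongr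
      _ = 2 * M * E / √b * exp (-(b / 4) * (x - y) ^ 2) := by ring
  have hsqrt : √(π / (b / 4)) = 2 * √(π / b) := by
    rw [div_div_eq_mul_div, mul_comm, mul_div_assoc, sqrt_mul (by norm_num),
      show (4 : ℝ) = 2 ^ 2 by norm_num, sqrt_sq (by norm_num)]
  rw [gaussMoment_eq_integral_sub_const hb hθ hM x (θ R), ← Real.norm_eq_abs]
  calc ‖∫ y, (x - y) * exp (-b * (x - y) ^ 2) * (θ y - θ R)‖
      ≤ ∫ y, 2 * M * E / √b * exp (-(b / 4) * (x - y) ^ 2) :=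
        norm_integral_le_of_norm_le
          (((integrable_exp_neg_mul_sq (by positivity)).comp_sub_left x).const_mul _)
          (.of_forall hpt)
    _ = 4 * M * √(π / b) / √b * E := by
        rw [integral_const_mul, integral_sub_left_eq_self (fun z => exp (-(b / 4) * z ^ 2)),
          integral_gaussian, hsqrt]
        ring
    _ = _ := by simp only [E]; ring

theorem abs_gaussMoment_le (hb : 0 < b) (hθ : AEStronglyMeasurable θ)
    (hM : ∀ y, |θ y| ≤ M) {R : ℝ} (hR : ∀ y, R ≤ y → θ y = θ R)
    (hL : ∀ y, y ≤ -R → θ y = θ (-R)) (x : ℝ) :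
    |gaussMoment b θ x| ≤
      4 * M * √(π / b) / √b * exp (b * R ^ 2 / 4) * exp (-(b / 8) * x ^ 2) := by
  rcases le_total 0 x with hx | hx
  · exact abs_gaussMoment_le_of_eq_on_Ici hb hθ hM hR hx
  · have := abs_gaussMoment_le_of_eq_on_Ici (θ := fun y => θ (-y)) hb
      (hθ.comp_measurePreserving (Measure.measurePreserving_neg volume)) (fun y => hM (-y))
      (fun y hy => hL (-y) (neg_le_neg hy)) (neg_nonneg.2 hx)
    rwa [gaussMoment_comp_neg, abs_neg, neg_sq] at this

end GaussianMoments

structure IsHopfColeWeight (θ : ℝ → ℝ) (m M R : ℝ) : Prop where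
  aestronglyMeasurable : AEStronglyMeasurable θ
  pos : 0 < m
  lower_le : ∀ y, m ≤ θ y
  le_upper : ∀ y, θ y ≤ M
  eq_right : ∀ y, R ≤ y → θ y = θ R
  eq_left : ∀ y, y ≤ -R → θ y = θ (-R)

namespace IsHopfColeWeight

variable {θ : ℝ → ℝ} {m M R : ℝ}

theorem abs_le_upper (hθ : IsHopfColeWeight θ m M R) (y : ℝ) : |θ y| ≤ M :=
  abs_le.2 ⟨by linarith [hθ.pos, hθ.lower_le y, hθ.le_upper y], hθ.le_upper y⟩

theorem upper_pos (hθ : IsHopfColeWeight θ m M R) : 0 < M :=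
  hθ.pos.trans_le ((hθ.lower_le 0).trans (hθ.le_upper 0))

theorem abs_gaussMoment_div_gaussConv_le (hθ : IsHopfColeWeight θ m M R) {b : ℝ} (hb : 0 < b)
    (x : ℝ) : |gaussMoment b θ x / gaussConv b θ x| ≤
      4 * M / (m * √b) * exp (b * R ^ 2 / 4) * exp (-(b / 8) * x ^ 2) := by
  have hlow :=
    mul_sqrt_pi_div_le_gaussConv hb hθ.aestronglyMeasurable hθ.abs_le_upper hθ.lower_le x
  have hlow_pos : 0 < m * √(π / b) := mul_pos hθ.pos (sqrt_pos.2 (by positivity))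
  have := hθ.upper_pos
  rw [abs_div, abs_of_pos (hlow_pos.trans_le hlow)]
  calc |gaussMoment b θ x| / gaussConv b θ x
      ≤ 4 * M * √(π / b) / √b * exp (b * R ^ 2 / 4) * exp (-(b / 8) * x ^ 2) /
          (m * √(π / b)) :=
        div_le_div₀ (by positivity)
          (abs_gaussMoment_le hb hθ.aestronglyMeasurable hθ.abs_le_upper hθ.eq_right hθ.eq_left x)
          hlow_pos hlow
    _ = _ := by
        have : √(π / b) ≠ 0 := (sqrt_pos.2 (by positivity)).ne'
        field_simp

end IsHopfColeWeight

theorem abs_intervalIntegral_le_integral_abs {g : ℝ → ℝ} (hg : Integrable g) (a b : ℝ) :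
    |∫ s in a..b, g s| ≤ ∫ s, |g s| :=
  (intervalIntegral.norm_integral_le_integral_norm_uIoc).trans
    (setIntegral_le_integral hg.norm (.of_forall fun _ => norm_nonneg _))

theorem intervalIntegral_eq_of_forall_uIcc_eq_zero {g : ℝ → ℝ} (hg : Continuous g)
    {a b c : ℝ} (h : ∀ s ∈ uIcc b c, g s = 0) :
    ∫ s in a..c, g s = ∫ s in a..b, g s := by
  rw [← intervalIntegral.integral_add_adjacent_intervals (b := b) (hg.intervalIntegrable _ _)
    (hg.intervalIntegrable _ _), intervalIntegral.integral_congr (g := 0) h]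
  simp

theorem isHopfColeWeight_exp_mul_primitive (κ : ℝ) {g : ℝ → ℝ} (hg : Continuous g)
    (hsupp : HasCompactSupport g) :
    ∃ m M R, IsHopfColeWeight (fun y => exp (κ * ∫ s in (0 : ℝ)..y, g s)) m M R := by
  obtain ⟨r, hr⟩ := hsupp.isBounded.subset_closedBall 0
  have hzero : ∀ s, r < |s| → g s = 0 := fun s hs =>
    image_eq_zero_of_notMem_tsupport fun h => by
      have := hr h
      rw [Metric.mem_closedBall, dist_zero_right, Real.norm_eq_abs] at this
      linarith
  set I := ∫ s, |g s|
  have hbound : ∀ y, |κ * ∫ s in (0 : ℝ)..y, g s| ≤ |κ| * I := fun y => by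
    rw [abs_mul]
    exact mul_le_mul_of_nonneg_left
      (abs_intervalIntegral_le_integral_abs (hg.integrable_of_hasCompactSupport hsupp) 0 y)
      (abs_nonneg κ)
  refine ⟨exp (-(|κ| * I)), exp (|κ| * I), r + 1, ⟨?_, exp_pos _, ?_, ?_, ?_, ?_⟩⟩
  · exact (continuous_const.mul (intervalIntegral.continuous_primitive
      (fun a b => hg.intervalIntegrable a b) 0)).rexp.aestronglyMeasurable
  · exact fun y => exp_le_exp.2 (neg_le_of_abs_le (hbound y))
  · exact fun y => exp_le_exp.2 (le_of_abs_le (hbound y))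
  · intro y hy
    rw [intervalIntegral_eq_of_forall_uIcc_eq_zero hg (b := r + 1) fun s hs => hzero s ?_]
    rw [uIcc_of_le hy] at hs
    exact (lt_add_one r).trans_le (hs.1.trans (le_abs_self s))
  · intro y hy
    rw [intervalIntegral_eq_of_forall_uIcc_eq_zero hg (b := -(r + 1)) fun s hs => hzero s ?_]
    rw [uIcc_of_ge hy] at hs
    exact (lt_add_one r).trans_le (le_neg.1 hs.2 |>.trans (neg_le_abs s))

theorem IsHopfColeWeight.abs_hopfCole_le {θ : ℝ → ℝ} {m M R : ℝ}
    (hθ : IsHopfColeWeight θ m M R) {ν t : ℝ} (hν : 0 < ν) (ht : 1 ≤ t) (x : ℝ) :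
    |(∫ y, ((x - y) / t) * exp (-(x - y) ^ 2 / (4 * ν * t)) * θ y) /
        ∫ y, exp (-(x - y) ^ 2 / (4 * ν * t)) * θ y| ≤
      8 * √ν * M / m * exp (R ^ 2 / (16 * ν)) / √t * exp (-(32 * ν * t)⁻¹ * x ^ 2) := by
  have ht0 : 0 < t := one_pos.trans_le ht
  set b := (4 * ν * t)⁻¹ with hb_def
  have hb : 0 < b := by positivity
  have hker : ∀ z : ℝ, -z ^ 2 / (4 * ν * t) = -b * z ^ 2 := fun z => by ring
  have hnum : ∫ y, ((x - y) / t) * exp (-(x - y) ^ 2 / (4 * ν * t)) * θ y =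
      t⁻¹ * gaussMoment b θ x := by
    rw [gaussMoment, ← integral_const_mul]
    congr 1 with y
    rw [hker]
    ring
  have hden : ∫ y, exp (-(x - y) ^ 2 / (4 * ν * t)) * θ y = gaussConv b θ x := by
    simp only [hker, gaussConv]
  have hshift : b * R ^ 2 / 4 ≤ R ^ 2 / (16 * ν) := by
    rw [show b * R ^ 2 / 4 = R ^ 2 / (16 * ν * t) by ring]
    exact div_le_div_of_nonneg_left (sq_nonneg R) (by positivity)
      (le_mul_of_one_le_right (by positivity) ht)
  have hsqrt : √b = (2 * √ν * √t)⁻¹ := by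
    rw [hb_def, sqrt_inv, sqrt_mul (by positivity), sqrt_mul (by norm_num),
      show (4 : ℝ) = 2 ^ 2 by norm_num, sqrt_sq (by norm_num)]
  rw [hnum, hden, mul_div_assoc, abs_mul, abs_of_pos (inv_pos.2 ht0)]
  calc t⁻¹ * |gaussMoment b θ x / gaussConv b θ x|
      ≤ t⁻¹ * (4 * M / (m * √b) * exp (b * R ^ 2 / 4) * exp (-(b / 8) * x ^ 2)) := by
        gcongr
        exact hθ.abs_gaussMoment_div_gaussConv_le hb x
    _ ≤ t⁻¹ * (4 * M / (m * √b) * exp (R ^ 2 / (16 * ν)) * exp (-(b / 8) * x ^ 2)) := by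
        have := hθ.pos
        have := hθ.upper_pos
        gcongr
    _ = _ := by
        have := hθ.pos
        rw [hsqrt, show b / 8 = (32 * ν * t)⁻¹ by ring]
        field_simp
        rw [sq_sqrt ht0.le]
        ring

theorem integral_sq_le_of_abs_le_gaussian {f : ℝ → ℝ} {A c : ℝ} (hc : 0 < c)
    (hf : ∀ x, |f x| ≤ A * exp (-c * x ^ 2)) : ∫ x, |f x| ^ 2 ≤ A ^ 2 * √(π / (2 * c)) := by
  have hsq : ∀ x, |f x| ^ 2 ≤ A ^ 2 * exp (-(2 * c) * x ^ 2) := fun x => by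
    calc |f x| ^ 2 ≤ (A * exp (-c * x ^ 2)) ^ 2 := pow_le_pow_left₀ (abs_nonneg _) (hf x) 2
      _ = A ^ 2 * exp (-(2 * c) * x ^ 2) := by rw [mul_pow, ← exp_nat_mul]; ring_nf
  calc ∫ x, |f x| ^ 2 ≤ ∫ x, A ^ 2 * exp (-(2 * c) * x ^ 2) :=
        integral_mono_of_nonneg (.of_forall fun x => by positivity)
          ((integrable_exp_neg_mul_sq (by positivity)).const_mul _) (.of_forall hsq)
    _ = A ^ 2 * √(π / (2 * c)) := by rw [integral_const_mul, integral_gaussian]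

theorem rpow_integral_sq_le_of_abs_le_heat_profile {f : ℝ → ℝ} {K a t : ℝ} (ha : 0 < a)
    (ht : 0 < t) (hf : ∀ x, |f x| ≤ K / √t * exp (-(a * t)⁻¹ * x ^ 2)) :
    (∫ x, |f x| ^ 2) ^ ((1 : ℝ) / 2) ≤ K * (π * a / 2) ^ ((1 : ℝ) / 4) * t ^ (-(1 : ℝ) / 4) := by
  have hK : 0 ≤ K := by
    have h0 : 0 ≤ K / √t := by simpa using (abs_nonneg _).trans (hf 0)
    simpa [div_mul_cancel₀ _ (sqrt_pos.2 ht).ne'] using mul_nonneg h0 (sqrt_nonneg t)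
  set q := π * a / 2
  have hq : 0 < q := by positivity
  have hsq : (K / √t) ^ 2 * √(π / (2 * (a * t)⁻¹)) =
      (K * q ^ ((1 : ℝ) / 4) * t ^ (-(1 : ℝ) / 4)) ^ 2 := by
    have e1 : (q ^ ((1 : ℝ) / 4)) ^ 2 = √q := by
      rw [sqrt_eq_rpow, ← rpow_natCast, ← rpow_mul hq.le]; norm_num
    have e2 : (t ^ (-(1 : ℝ) / 4)) ^ 2 = (√t)⁻¹ := by
      rw [sqrt_eq_rpow, ← rpow_neg ht.le, ← rpow_natCast, ← rpow_mul ht.le]; norm_num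
    have e3 : π / (2 * (a * t)⁻¹) = q * t := by field_simp; ring
    rw [mul_pow, mul_pow, e1, e2, e3, sqrt_mul hq.le, div_pow]
    field_simp
  calc (∫ x, |f x| ^ 2) ^ ((1 : ℝ) / 2)
      ≤ ((K * q ^ ((1 : ℝ) / 4) * t ^ (-(1 : ℝ) / 4)) ^ 2) ^ ((1 : ℝ) / 2) :=
        rpow_le_rpow (integral_nonneg fun _ => by positivity)
          (hsq ▸ integral_sq_le_of_abs_le_gaussian (by positivity) hf) (by norm_num)
    _ = K * q ^ ((1 : ℝ) / 4) * t ^ (-(1 : ℝ) / 4) := by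
        rw [← sqrt_eq_rpow, sqrt_sq (by positivity)]

/-- **L² decay.** For `ν > 0` and `g` continuous with compact support, the Hopf–Cole
solution satisfies `‖u(·,t)‖_{L²(ℝ)} = O(t^{-1/4})` as `t → ∞`. -/
theorem hopf_cole_solution_L2_decay
    (ν : ℝ) (hν : 0 < ν)
    (g : ℝ → ℝ) (hcont : Continuous g) (hsupp : HasCompactSupport g)
    (θ₀ : ℝ → ℝ)
    (hθ₀ : ∀ y : ℝ, θ₀ y = Real.exp (-(1 / (2 * ν)) * ∫ s in (0:ℝ)..y, g s))
    (u : ℝ → ℝ → ℝ)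
    (hu : ∀ x t : ℝ, 0 < t →
      u x t = (∫ y : ℝ, ((x - y) / t) * Real.exp (-(x - y) ^ 2 / (4 * ν * t)) * θ₀ y) /
              (∫ y : ℝ, Real.exp (-(x - y) ^ 2 / (4 * ν * t)) * θ₀ y)) :
    ∃ C T : ℝ, 0 < C ∧ 0 < T ∧ ∀ t : ℝ, T ≤ t →
      (∫ x : ℝ, |u x t| ^ 2) ^ ((1:ℝ)/2) ≤ C * t ^ (-(1:ℝ)/4) := by
  obtain ⟨m, M, R, hθ⟩ := isHopfColeWeight_exp_mul_primitive (-(1 / (2 * ν))) hcont hsupp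
  obtain rfl : θ₀ = _ := funext hθ₀
  refine ⟨8 * √ν * M / m * exp (R ^ 2 / (16 * ν)) * (π * (32 * ν) / 2) ^ ((1 : ℝ) / 4), 1,
    by have := hθ.pos; have := hθ.upper_pos; positivity, one_pos, fun t ht => ?_⟩
  refine rpow_integral_sq_le_of_abs_le_heat_profile (by positivity) (one_pos.trans_le ht)
    fun x => ?_
  rw [hu x t (one_pos.trans_le ht)]
  exact hθ.abs_hopfCole_le hν ht x
end

section
/- Let ν > 0 and let g : ℝ → ℝ be continuous with compact support. Define θ₀(y) = exp(−(1/(2ν)) ∫₀^y g(s) ds) and, for x ∈ ℝ and t > 0, u(x,t) = [∫_{-∞}^{∞} ((x−y)/t) e^{−(x−y)²/(4νt)} θ₀(y) dy] / [∫_{-∞}^{∞} e^{−(x−y)²/(4νt)} θ₀(y) dy]. Then ‖u(·,t)‖_{L^∞(ℝ)} = O(t^{−1/2}) as t → ∞; that is, there exist C > 0 and T > 0 such that for all t ≥ T and all x ∈ ℝ, |u(x,t)| ≤ C t^{−1/2}. -/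
open Set MeasureTheory Real

/-! For `t > 0` the Hopf–Cole `u(x,t)` is the mean of `(x - y)/t` against the positive weight
`y ↦ e^{-(x-y)²/(4νt)} θ₀(y)`. Since `g` is integrable, `|∫₀^y g| ≤ ‖g‖₁`, so `θ₀` is pinched
between `m = e^{-‖g‖₁/(2ν)}` and `M = e^{‖g‖₁/(2ν)}`. Replacing `θ₀` by these constants leaves
pure Gaussian integrals: `|u(x,t)| ≤ (M/m) t⁻¹ ∫|z| e^{-z²/b} / ∫ e^{-z²/b}` with `b = 4νt`, and
`|z| e^{-z²/b} ≤ √b e^{-z²/(2b)}` makes the quotient `√(2b)/t = √(8ν) t^{-1/2}`. -/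

lemma exp_neg_mul_intervalIntegral_mem_Icc {g : ℝ → ℝ} (hg : Integrable g) {c : ℝ}
    (hc : 0 ≤ c) (y : ℝ) :
    exp (-c * ∫ s in (0:ℝ)..y, g s) ∈ Icc (exp (-(c * ∫ s, |g s|))) (exp (c * ∫ s, |g s|)) := by
  have hprim : ‖∫ s in (0:ℝ)..y, g s‖ ≤ ∫ s, ‖g s‖ :=
    intervalIntegral.norm_integral_le_integral_norm_uIoc.trans
      (setIntegral_le_integral hg.norm (.of_forall fun _ => norm_nonneg _))
  have h : |-c * ∫ s in (0:ℝ)..y, g s| ≤ c * ∫ s, |g s| := by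
    rw [abs_mul, abs_neg, abs_of_nonneg hc]
    exact mul_le_mul_of_nonneg_left (by simpa only [norm_eq_abs] using hprim) hc
  exact ⟨exp_le_exp.mpr (abs_le.mp h).1, exp_le_exp.mpr (abs_le.mp h).2⟩

section GaussianKernel

lemma integral_exp_neg_sub_sq_div (c x : ℝ) :
    ∫ y, exp (-(x - y) ^ 2 / c) = √(π * c) := by
  simp_rw [neg_div, div_eq_inv_mul, ← neg_mul]
  rw [integral_sub_left_eq_self (fun z => exp (-c⁻¹ * z ^ 2)) volume x, integral_gaussian,
    div_inv_eq_mul]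

variable {c : ℝ}

lemma integrable_exp_neg_sub_sq_div (hc : 0 < c) (x : ℝ) :
    Integrable fun y => exp (-(x - y) ^ 2 / c) := by
  simp_rw [neg_div, div_eq_inv_mul, ← neg_mul]
  exact (integrable_exp_neg_mul_sq (inv_pos.mpr hc)).comp_sub_left x

/-- From `s ≤ 1 + s²/2 ≤ e^{s²/2}` at `s = |z|/√c`. -/
lemma abs_mul_exp_neg_sq_div_le (hc : 0 < c) (z : ℝ) :
    |z| * exp (-z ^ 2 / c) ≤ √c * exp (-z ^ 2 / (2 * c)) := by
  have hsc : 0 < √c := sqrt_pos.mpr hc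
  have hs2 : (|z| / √c) ^ 2 = z ^ 2 / c := by rw [div_pow, sq_abs, sq_sqrt hc.le]
  have hle : |z| ≤ √c * exp (z ^ 2 / (2 * c)) := by
    have he := add_one_le_exp (z ^ 2 / (2 * c))
    rw [show z ^ 2 / (2 * c) = (|z| / √c) ^ 2 / 2 by rw [hs2]; ring] at he ⊢
    rw [← div_le_iff₀' hsc]
    nlinarith [sq_nonneg (|z| / √c - 1)]
  calc |z| * exp (-z ^ 2 / c) ≤ √c * exp (z ^ 2 / (2 * c)) * exp (-z ^ 2 / c) := by gcongr
    _ = √c * exp (-z ^ 2 / (2 * c)) := by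
      rw [mul_assoc, ← exp_add]
      congr 2
      field_simp
      ring

lemma integrable_sub_mul_exp_neg_sub_sq_div (hc : 0 < c) (x : ℝ) :
    Integrable fun y => (x - y) * exp (-(x - y) ^ 2 / c) :=
  ((integrable_exp_neg_sub_sq_div (c := 2 * c) (by positivity) x).const_mul √c).mono'
    (by fun_prop) (.of_forall fun y => by
      simpa only [norm_mul, norm_eq_abs, abs_exp] using abs_mul_exp_neg_sq_div_le hc (x - y))

lemma integral_abs_sub_mul_exp_neg_sub_sq_div_le (hc : 0 < c) (x : ℝ) :
    ∫ y, |(x - y) * exp (-(x - y) ^ 2 / c)| ≤ √(2 * c) * √(π * c) :=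
  calc ∫ y, |(x - y) * exp (-(x - y) ^ 2 / c)| ≤ ∫ y, √c * exp (-(x - y) ^ 2 / (2 * c)) := by
        refine integral_mono (integrable_sub_mul_exp_neg_sub_sq_div hc x).abs
          ((integrable_exp_neg_sub_sq_div (by positivity) x).const_mul √c) fun y => ?_
        simpa only [abs_mul, abs_exp] using abs_mul_exp_neg_sq_div_le hc (x - y)
    _ = √(2 * c) * √(π * c) := by
        rw [integral_const_mul, integral_exp_neg_sub_sq_div, ← sqrt_mul hc.le,
          ← sqrt_mul (by positivity)]
        ring_nf

lemma integral_abs_sub_div_mul_exp_div_integral_le (hc : 0 < c) {t : ℝ} (ht : 0 < t) (x : ℝ) :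
    (∫ y, |(x - y) / t * exp (-(x - y) ^ 2 / c)|) / ∫ y, exp (-(x - y) ^ 2 / c) ≤
      √(2 * c) / t := by
  have hπc : 0 < √(π * c) := sqrt_pos.mpr (by positivity)
  simp_rw [div_mul_eq_mul_div, abs_div, abs_of_pos ht, integral_div,
    integral_exp_neg_sub_sq_div, div_right_comm _ t, div_le_div_iff_of_pos_right ht,
    div_le_iff₀ hπc]
  exact integral_abs_sub_mul_exp_neg_sub_sq_div_le hc x

end GaussianKernel

lemma abs_integral_mul_div_integral_le {α : Type*} [MeasurableSpace α] {μ : Measure α}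
    {k h θ : α → ℝ} {m M : ℝ} (hm : 0 < m) (hθm : ∀ y, m ≤ θ y) (hθM : ∀ y, θ y ≤ M)
    (hθ : AEStronglyMeasurable θ μ) (hk0 : ∀ y, 0 ≤ k y) (hk : Integrable k μ)
    (hkpos : 0 < ∫ y, k y ∂μ) (hhk : Integrable (fun y => h y * k y) μ) :
    |(∫ y, h y * k y * θ y ∂μ) / ∫ y, k y * θ y ∂μ| ≤
      M / m * ((∫ y, |h y * k y| ∂μ) / ∫ y, k y ∂μ) := by
  have hθ0 : ∀ y, 0 ≤ θ y := fun y => hm.le.trans (hθm y)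
  have hθbdd : ∀ᵐ y ∂μ, ‖θ y‖ ≤ M :=
    .of_forall fun y => by rw [norm_eq_abs, abs_of_nonneg (hθ0 y)]; exact hθM y
  have hnum : |∫ y, h y * k y * θ y ∂μ| ≤ M * ∫ y, |h y * k y| ∂μ :=
    calc |∫ y, h y * k y * θ y ∂μ| ≤ ∫ y, |h y * k y * θ y| ∂μ :=
          abs_integral_le_integral_abs
      _ ≤ ∫ y, M * |h y * k y| ∂μ := by
          refine integral_mono (hhk.mul_bdd hθ hθbdd).abs (hhk.abs.const_mul M) fun y => ?_
          rw [abs_mul, abs_of_nonneg (hθ0 y), mul_comm]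
          exact mul_le_mul_of_nonneg_right (hθM y) (abs_nonneg _)
      _ = M * ∫ y, |h y * k y| ∂μ := integral_const_mul _ _
  have hden : m * ∫ y, k y ∂μ ≤ ∫ y, k y * θ y ∂μ := by
    rw [← integral_const_mul]
    refine integral_mono (hk.const_mul m) (hk.mul_bdd hθ hθbdd) fun y => ?_
    rw [mul_comm]
    exact mul_le_mul_of_nonneg_left (hθm y) (hk0 y)
  have hden_pos : 0 < m * ∫ y, k y ∂μ := mul_pos hm hkpos
  rw [abs_div, abs_of_pos (hden_pos.trans_le hden), div_mul_div_comm]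
  exact div_le_div₀ ((abs_nonneg _).trans hnum) hnum hden_pos hden

/-- **L^∞ decay.** For `ν > 0` and `g` continuous with compact support, the Hopf–Cole
solution satisfies `‖u(·,t)‖_{L^∞(ℝ)} = O(t^{-1/2})` as `t → ∞`. -/
theorem hopf_cole_solution_Linfty_decay
    (ν : ℝ) (hν : 0 < ν)
    (g : ℝ → ℝ) (hcont : Continuous g) (hsupp : HasCompactSupport g)
    (θ₀ : ℝ → ℝ)
    (hθ₀ : ∀ y : ℝ, θ₀ y = Real.exp (-(1 / (2 * ν)) * ∫ s in (0:ℝ)..y, g s))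
    (u : ℝ → ℝ → ℝ)
    (hu : ∀ x t : ℝ, 0 < t →
      u x t = (∫ y : ℝ, ((x - y) / t) * Real.exp (-(x - y) ^ 2 / (4 * ν * t)) * θ₀ y) /
              (∫ y : ℝ, Real.exp (-(x - y) ^ 2 / (4 * ν * t)) * θ₀ y)) :
    ∃ C T : ℝ, 0 < C ∧ 0 < T ∧ ∀ t : ℝ, T ≤ t → ∀ x : ℝ,
      |u x t| ≤ C * t ^ (-(1:ℝ)/2) := by
  have hg : Integrable g := hcont.integrable_of_hasCompactSupport hsupp
  set a := 1 / (2 * ν) * ∫ s, |g s|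
  have hθ_mem y : θ₀ y ∈ Icc (exp (-a)) (exp a) :=
    hθ₀ y ▸ exp_neg_mul_intervalIntegral_mem_Icc hg (by positivity) y
  have hθ_cont : Continuous θ₀ := by
    rw [funext hθ₀]
    exact continuous_exp.comp (continuous_const.mul (hg.continuous_primitive 0))
  refine ⟨exp a / exp (-a) * √(8 * ν), 1, by positivity, one_pos, fun t ht x => ?_⟩
  have ht0 : 0 < t := one_pos.trans_le ht
  have hb : 0 < 4 * ν * t := by positivity
  have hk_pos : 0 < ∫ y, exp (-(x - y) ^ 2 / (4 * ν * t)) := by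
    rw [integral_exp_neg_sub_sq_div]; positivity
  have hhk : Integrable fun y => (x - y) / t * exp (-(x - y) ^ 2 / (4 * ν * t)) := by
    simpa only [div_mul_eq_mul_div] using (integrable_sub_mul_exp_neg_sub_sq_div hb x).div_const t
  have hscale : √(2 * (4 * ν * t)) / t = √(8 * ν) * t ^ (-(1:ℝ)/2) := by
    rw [show 2 * (4 * ν * t) = 8 * ν * t by ring, sqrt_mul (by positivity), mul_div_assoc,
      sqrt_div_self', one_div, sqrt_eq_rpow t, ← rpow_neg ht0.le]
    norm_num
  rw [mul_assoc, ← hscale, hu x t ht0]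
  refine (abs_integral_mul_div_integral_le (exp_pos _) (fun y => (hθ_mem y).1)
    (fun y => (hθ_mem y).2) hθ_cont.aestronglyMeasurable (fun _ => (exp_pos _).le)
    (integrable_exp_neg_sub_sq_div hb x) hk_pos hhk).trans ?_
  exact mul_le_mul_of_nonneg_left (integral_abs_sub_div_mul_exp_div_integral_le hb ht0 x)
    (by positivity)
end

section
/- Let ν > 0 and m ∈ ℝ with m ≠ 0, and set λ = (1 + e^{−m/(2ν)})/2 and h = (1 − e^{−m/(2ν)})/2. Then ∫_{-∞}^{∞} e^{−x²} / (λ − h·erf(x)) dx = (√π / (2h)) · (m / (2ν)), where erf(x) = (2/√π) ∫₀^x e^{−ξ²} dξ. -/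
/-! Since `erf' = (2/√π) e^{-x²}`, the integrand is `-(√π/(2h))` times the logarithmic
derivative of `D = λ - h·erf`. As `D = (1 - erf)/2 · (λ + h) + (1 + erf)/2 · (λ - h)` with
`|erf| ≤ 1`, `D` stays above `min (λ + h) (λ - h) > 0` and runs from `λ + h = 1` at `-∞` to
`λ - h = e^{-m/(2ν)}` at `+∞`, so the integral is `(√π/(2h)) · (log 1 - log e^{-m/(2ν)})`. -/

open Set MeasureTheory Real

/-- The error function `erf(x) = (2/√π) ∫₀^x e^{-ξ²} dξ`. -/
noncomputable def errorFunction (x : ℝ) : ℝ :=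
  (2 / Real.sqrt π) * ∫ ξ in (0:ℝ)..x, Real.exp (-ξ ^ 2)

open Filter Topology

lemma integrable_exp_neg_sq : Integrable fun x : ℝ => exp (-x ^ 2) := by
  simpa using integrable_exp_neg_mul_sq (b := 1) one_pos

lemma integral_Ioi_exp_neg_sq : ∫ x in Ioi (0 : ℝ), exp (-x ^ 2) = √π / 2 := by
  simpa using integral_gaussian_Ioi 1

theorem integral_deriv_div_eq_log_sub {f f' : ℝ → ℝ} {c a b : ℝ} (hc : 0 < c)
    (hf : ∀ x, HasDerivAt f (f' x) x) (hf' : Integrable f') (hfc : ∀ x, c ≤ f x)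
    (hbot : Tendsto f atBot (𝓝 a)) (htop : Tendsto f atTop (𝓝 b)) :
    ∫ x, f' x / f x = log b - log a := by
  have hf0 : ∀ x, f x ≠ 0 := fun x => (hc.trans_le (hfc x)).ne'
  have ha : a ≠ 0 := (hc.trans_le (ge_of_tendsto' hbot hfc)).ne'
  have hb : b ≠ 0 := (hc.trans_le (ge_of_tendsto' htop hfc)).ne'
  have hcont : Continuous f := continuous_iff_continuousAt.2 fun x => (hf x).continuousAt
  have hint : Integrable fun x => f' x / f x := by
    refine (hf'.norm.mul_const c⁻¹).mono' (hf'.1.div₀ hcont.aestronglyMeasurable) ?_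
    refine Eventually.of_forall fun x => ?_
    rw [norm_div, div_eq_mul_inv, Real.norm_of_nonneg (hc.le.trans (hfc x))]
    exact mul_le_mul_of_nonneg_left (inv_anti₀ hc (hfc x)) (norm_nonneg _)
  exact integral_of_hasDerivAt_of_tendsto (fun x => (hf x).log (hf0 x)) hint
    (((continuousAt_log ha).tendsto).comp hbot) (((continuousAt_log hb).tendsto).comp htop)

lemma min_le_weighted_average_of_abs_le_one {a b t : ℝ} (ht : |t| ≤ 1) :
    min a b ≤ (1 - t) / 2 * a + (1 + t) / 2 * b := by
  obtain ⟨ht₁, ht₂⟩ := abs_le.1 ht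
  nlinarith [min_le_left a b, min_le_right a b]

namespace errorFunction

lemma hasDerivAt (x : ℝ) :
    HasDerivAt errorFunction (2 / √π * exp (-x ^ 2)) x :=
  ((Continuous.integral_hasStrictDerivAt (by fun_prop) 0 x).hasDerivAt).const_mul _

lemma monotone : Monotone errorFunction :=
  monotone_of_hasDerivAt_nonneg hasDerivAt fun x => by positivity

lemma neg (x : ℝ) : errorFunction (-x) = -errorFunction x := by
  have h := intervalIntegral.integral_comp_neg (a := 0) (b := x) fun ξ => exp (-ξ ^ 2)
  simp only [neg_sq, neg_zero] at h
  rw [errorFunction, errorFunction, intervalIntegral.integral_symm (-x) 0, ← h, mul_neg]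

lemma tendsto_atTop : Tendsto errorFunction atTop (𝓝 1) := by
  have h := (intervalIntegral_tendsto_integral_Ioi 0 integrable_exp_neg_sq.integrableOn
    tendsto_id).const_mul (2 / √π)
  rwa [integral_Ioi_exp_neg_sq, div_mul_div_cancel₀' two_ne_zero, div_self (by positivity)] at h

lemma tendsto_atBot : Tendsto errorFunction atBot (𝓝 (-1)) := by
  have h := (tendsto_atTop.comp tendsto_neg_atBot_atTop).neg
  simpa [Function.comp_def, neg] using h

lemma abs_le_one (x : ℝ) : |errorFunction x| ≤ 1 :=
  abs_le.2 ⟨monotone.le_of_tendsto tendsto_atBot x, monotone.ge_of_tendsto tendsto_atTop x⟩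

end errorFunction

theorem integral_exp_neg_sq_div_sub_mul_errorFunction {lam h : ℝ} (hh : h ≠ 0)
    (hplus : 0 < lam + h) (hminus : 0 < lam - h) :
    ∫ x, exp (-x ^ 2) / (lam - h * errorFunction x)
      = √π / (2 * h) * (log (lam + h) - log (lam - h)) := by
  set D := fun x => lam - h * errorFunction x
  have hDderiv : ∀ x, HasDerivAt D (-(h * (2 / √π)) * exp (-x ^ 2)) x := fun x => by
    simpa [mul_assoc] using ((errorFunction.hasDerivAt x).const_mul h).const_sub lam
  have hDmin : ∀ x, min (lam + h) (lam - h) ≤ D x := fun x => by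
    convert min_le_weighted_average_of_abs_le_one (errorFunction.abs_le_one x) using 1
    ring
  have hDbot : Tendsto D atBot (𝓝 (lam + h)) := by
    simpa using (errorFunction.tendsto_atBot.const_mul h).const_sub lam
  have hDtop : Tendsto D atTop (𝓝 (lam - h)) := by
    simpa using (errorFunction.tendsto_atTop.const_mul h).const_sub lam
  have hlog := integral_deriv_div_eq_log_sub (lt_min hplus hminus) hDderiv
    (integrable_exp_neg_sq.const_mul _) hDmin hDbot hDtop
  have hsplit : (fun x => exp (-x ^ 2) / D x)
      = fun x => -(√π / (2 * h)) * (-(h * (2 / √π)) * exp (-x ^ 2) / D x) := by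
    funext x; field_simp
  rw [hsplit, integral_const_mul, hlog]
  ring

/-- **Integral identity for the asymptotic profile.** For `ν > 0` and `m ≠ 0`, with
`λ = (1 + e^{-m/(2ν)})/2` and `h = (1 - e^{-m/(2ν)})/2`,
`∫ e^{-x²}/(λ - h·erf(x)) dx = (√π/(2h)) · (m/(2ν))`. -/
theorem asymptotic_profile_integral_value
    (ν m : ℝ) (hν : 0 < ν) (hm : m ≠ 0)
    (lam h : ℝ)
    (hlam : lam = (1 + Real.exp (-(m / (2 * ν)))) / 2)
    (hh : h = (1 - Real.exp (-(m / (2 * ν)))) / 2) :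
    ∫ x : ℝ, Real.exp (-x ^ 2) / (lam - h * errorFunction x)
      = (Real.sqrt π / (2 * h)) * (m / (2 * ν)) := by
  have hplus : lam + h = 1 := by rw [hlam, hh]; ring
  have hminus : lam - h = exp (-(m / (2 * ν))) := by rw [hlam, hh]; ring
  have hh0 : h ≠ 0 := by
    have : exp (-(m / (2 * ν))) ≠ 1 := by
      rw [Ne, exp_eq_one_iff, neg_eq_zero]; positivity
    contrapose! this; linarith
  rw [integral_exp_neg_sq_div_sub_mul_errorFunction hh0 (by rw [hplus]; exact one_pos)
    (by rw [hminus]; exact exp_pos _), hplus, hminus, log_exp, log_one]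
  ring
end
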